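/- arXiv:2504.17098 — 8 statements merged into one kernel-verified Lean document; each statement's English description precedes it below -/
import Mathlib

section
/- If the composition k of n is right-justified (all zero entries occur before all nonzero entries), then the asymmetric multinomial coefficient A(k) equals the ordinary multinomial coefficient n! / (k_1! k_2! ... k_n!). -/
/-- Remove the rightmost zero from a list (if any). -/
def rmRightZero (l : List ℕ) : List ℕ := (l.reverse.erase 0).reverse

/-- The 1-indexed position of the rightmost zero of `l`, or `0` if `l` has no zero. -/
def maxzero (l : List ℕ) : ℕ := l.length - l.reverse.idxOf 0

/-- `stepComp l j` decreases the `j`-th entry (1-indexed) of `l` by one and then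
deletes the rightmost zero of the result: the composition `k^{(j)}`. -/
def stepComp (l : List ℕ) (j : ℕ) : List ℕ :=
  rmRightZero (l.set (j - 1) (l.getD (j - 1) 0 - 1))

/-- Fuelled version of the asymmetric multinomial coefficient recursion. -/
def asymAux : ℕ → List ℕ → ℕ
  | _, [] => 1
  | 0, _ => 1
  | f + 1, l => ∑ j ∈ Finset.Icc (maxzero l + 1) l.length, asymAux f (stepComp l j)

/-- The asymmetric multinomial coefficient of a composition, defined by the recursion
`A([]) = 1`, `A(k) = ∑_{j = i+1}^{n} A(k^{(j)})` where `i` is the position of the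
rightmost zero of `k` (or `0` if there is none). -/
def asym (l : List ℕ) : ℕ := asymAux l.length l

/-- list-level multinomial -/
def M (l : List ℕ) : ℕ := Nat.factorial l.sum / (l.map Nat.factorial).prod

lemma sum_range_getD (l : List ℕ) : ∑ i ∈ Finset.range l.length, l.getD i 0 = l.sum := by
  induction l with
  | nil => simp
  | cons a t ih =>
      rw [List.length_cons, Finset.sum_range_succ']
      simp only [List.getD_cons_succ, List.getD_cons_zero, ih, List.sum_cons]
      ring

lemma prod_range_getD (l : List ℕ) :
    ∏ i ∈ Finset.range l.length, Nat.factorial (l.getD i 0) = (l.map Nat.factorial).prod := by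
  induction l with
  | nil => simp
  | cons a t ih =>
      rw [List.length_cons, Finset.prod_range_succ']
      simp only [List.getD_cons_succ, List.getD_cons_zero, ih, List.map_cons, List.prod_cons]
      ring

lemma multinomial_range_eq (l : List ℕ) :
    Nat.multinomial (Finset.range l.length) (fun i => l.getD i 0) = M l := by
  rw [Nat.multinomial, M, sum_range_getD, prod_range_getD]

lemma M_spec (l : List ℕ) : (l.map Nat.factorial).prod * M l = Nat.factorial l.sum := by
  have := Nat.multinomial_spec (Finset.range l.length) (fun i => l.getD i 0)
  rwa [sum_range_getD, prod_range_getD, multinomial_range_eq] at this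

lemma prod_fact_pos (l : List ℕ) : 0 < (l.map Nat.factorial).prod := by
  apply List.prod_pos
  intro x hx
  simp only [List.mem_map] at hx
  obtain ⟨y, -, rfl⟩ := hx
  exact Nat.factorial_pos y

lemma maxzero_rep (z : ℕ) (p : List ℕ) (hp : ∀ x ∈ p, 0 < x) :
    maxzero (List.replicate z 0 ++ p) = z := by
  have h0 : 0 ∉ p.reverse := by
    intro h
    exact absurd (hp 0 (List.mem_reverse.mp h)) (lt_irrefl 0)
  have hidx : List.idxOf 0 ((List.replicate z 0 ++ p).reverse) = p.length := by
    rw [List.reverse_append, List.reverse_replicate]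
    cases z with
    | zero =>
        simp only [List.replicate_zero, List.append_nil]
        rw [List.idxOf_eq_length h0, List.length_reverse]
    | succ z' =>
        rw [List.idxOf_append_of_notMem h0]
        simp [List.replicate_succ, List.idxOf_cons_self]
  rw [maxzero, hidx]
  simp [List.length_append]

lemma rm_rep_pos (z : ℕ) (q : List ℕ) (hq : ∀ x ∈ q, 0 < x) :
    rmRightZero (List.replicate z 0 ++ q) = List.replicate (z - 1) 0 ++ q := by
  have h0 : 0 ∉ q.reverse := by
    intro h; exact absurd (hq 0 (List.mem_reverse.mp h)) (lt_irrefl 0)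
  rw [rmRightZero, List.reverse_append, List.reverse_replicate]
  cases z with
  | zero =>
      simp only [List.replicate_zero, List.append_nil]
      rw [List.erase_of_not_mem h0, List.reverse_reverse]
      simp
  | succ z' =>
      rw [List.erase_append_right _ h0]
      simp only [List.replicate_succ, List.erase_cons_head, List.reverse_append,
        List.reverse_replicate, List.reverse_reverse, Nat.succ_sub_one]

lemma rm_rep_zero (z : ℕ) (q1 q2 : List ℕ) (hq : ∀ x ∈ q2, 0 < x) :
    rmRightZero (List.replicate z 0 ++ (q1 ++ 0 :: q2)) = List.replicate z 0 ++ (q1 ++ q2) := by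
  have h0 : 0 ∉ q2.reverse := by
    intro h; exact absurd (hq 0 (List.mem_reverse.mp h)) (lt_irrefl 0)
  rw [rmRightZero, List.reverse_append, List.reverse_append, List.reverse_cons,
    List.append_assoc, List.append_assoc, List.erase_append_right _ h0,
    List.singleton_append, List.erase_cons_head]
  simp [List.reverse_append]

lemma getD_rep (z t : ℕ) (p : List ℕ) :
    (List.replicate z 0 ++ p).getD (z + t) 0 = p.getD t 0 := by
  simp only [List.getD_eq_getElem?_getD]
  rw [List.getElem?_append_right (by simp)]
  simp

lemma set_rep (z t : ℕ) (p : List ℕ) (v : ℕ) :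
    (List.replicate z 0 ++ p).set (z + t) v = List.replicate z 0 ++ p.set t v := by
  rw [List.set_append_right _ _ (by simp)]
  simp

lemma stepComp_rep (z t : ℕ) (p : List ℕ) :
    stepComp (List.replicate z 0 ++ p) (z + 1 + t) =
      rmRightZero (List.replicate z 0 ++ p.set t (p.getD t 0 - 1)) := by
  have h1 : z + 1 + t - 1 = z + t := by omega
  rw [stepComp, h1, getD_rep, set_rep]

lemma sum_pos_of_ne (p : List ℕ) (hp : ∀ x ∈ p, 0 < x) (hne : p ≠ []) : 0 < p.sum := by
  cases p with
  | nil => exact absurd rfl hne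
  | cons a t => simp only [List.sum_cons]
                exact lt_of_lt_of_le (hp a (by simp)) (Nat.le_add_right _ _)

lemma set_sum (p : List ℕ) (t : ℕ) (ht : t < p.length) (hpos : 0 < p.getD t 0) :
    (p.set t (p.getD t 0 - 1)).sum = p.sum - 1 := by
  rw [List.getD_eq_getElem _ _ ht, List.set_eq_take_cons_drop _ ht]
  conv_rhs => rw [← List.take_append_drop t p, List.drop_eq_getElem_cons ht]
  simp only [List.sum_append, List.sum_cons]
  have := hpos
  rw [List.getD_eq_getElem _ _ ht] at this
  omega

lemma prod_fact_set (p : List ℕ) (t : ℕ) (ht : t < p.length) (hpos : 0 < p.getD t 0) :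
    (p.map Nat.factorial).prod
      = p.getD t 0 * ((p.set t (p.getD t 0 - 1)).map Nat.factorial).prod := by
  rw [List.getD_eq_getElem _ _ ht, List.set_eq_take_cons_drop _ ht]
  conv_lhs => rw [← List.take_append_drop t p, List.drop_eq_getElem_cons ht]
  rw [List.getD_eq_getElem _ _ ht] at hpos
  simp only [List.map_append, List.map_cons, List.prod_append, List.prod_cons]
  rw [← Nat.mul_factorial_pred hpos.ne']
  ring

lemma M_sum (p : List ℕ) (hp : ∀ x ∈ p, 0 < x) (hne : p ≠ []) :
    M p = ∑ t ∈ Finset.range p.length, M (p.set t (p.getD t 0 - 1)) := by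
  have hs : 0 < p.sum := sum_pos_of_ne p hp hne
  have key : (p.map Nat.factorial).prod *
      (∑ t ∈ Finset.range p.length, M (p.set t (p.getD t 0 - 1))) = Nat.factorial p.sum := by
    rw [Finset.mul_sum]
    have hterm : ∀ t ∈ Finset.range p.length,
        (p.map Nat.factorial).prod * M (p.set t (p.getD t 0 - 1))
          = p.getD t 0 * Nat.factorial (p.sum - 1) := by
      intro t ht
      rw [Finset.mem_range] at ht
      have hpos : 0 < p.getD t 0 := by
        rw [List.getD_eq_getElem _ _ ht]
        exact hp _ (List.getElem_mem ht)
      rw [prod_fact_set p t ht hpos, mul_assoc, M_spec, set_sum p t ht hpos]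
    rw [Finset.sum_congr rfl hterm, ← Finset.sum_mul, sum_range_getD,
      Nat.mul_factorial_pred hs.ne']
  rw [M]
  exact Nat.div_eq_of_eq_mul_right (prod_fact_pos p) key.symm

lemma M_erase (p : List ℕ) (t : ℕ) (ht : t < p.length) :
    M (p.take t ++ p.drop (t + 1)) = M (p.set t 0) := by
  rw [M, M, List.set_eq_take_cons_drop _ ht]
  simp [List.sum_append, List.map_append, List.prod_append, Nat.factorial]

lemma asymAux_succ (f : ℕ) (l : List ℕ) (hl : l ≠ []) :
    asymAux (f + 1) l = ∑ j ∈ Finset.Icc (maxzero l + 1) l.length, asymAux f (stepComp l j) := by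
  cases l with
  | nil => exact absurd rfl hl
  | cons a t => rfl

lemma main_lemma (s : ℕ) : ∀ z p, (∀ x ∈ p, 0 < x) → p.sum = s →
    asymAux s (List.replicate z 0 ++ p) = M p := by
  induction s with
  | zero =>
      intro z p hp h0
      have hpnil : p = [] := by
        cases p with
        | nil => rfl
        | cons a t =>
            exfalso
            have := hp a (by simp)
            simp only [List.sum_cons] at h0
            omega
      subst hpnil
      rw [List.append_nil]
      have h1 : asymAux 0 (List.replicate z 0) = 1 := by cases z <;> rfl
      rw [h1, M]
      simp
  | succ s ih =>
      intro z p hp hsum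
      have hne : p ≠ [] := by
        intro h; subst h; simp at hsum
      rw [asymAux_succ _ _ (by simp [hne]), maxzero_rep z p hp]
      have hlen : (List.replicate z 0 ++ p).length = z + p.length := by simp
      rw [hlen, ← Finset.Ico_add_one_right_eq_Icc, Finset.sum_Ico_eq_sum_range]
      have hcard : z + p.length + 1 - (z + 1) = p.length := by omega
      rw [hcard]
      rw [M_sum p hp hne]
      apply Finset.sum_congr rfl
      intro t ht
      rw [Finset.mem_range] at ht
      have hpos : 0 < p.getD t 0 := by
        rw [List.getD_eq_getElem _ _ ht]
        exact hp _ (List.getElem_mem ht)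
      have hstep : z + 1 + t = z + 1 + t := rfl
      rw [stepComp_rep z t p]
      by_cases hc : p.getD t 0 = 1
      · -- entry is 1 : the new zero is removed
        rw [hc]
        have hset : p.set t (1 - 1) = p.take t ++ 0 :: p.drop (t + 1) := by
          simpa using List.set_eq_take_cons_drop 0 ht
        have hdroppos : ∀ x ∈ p.drop (t + 1), 0 < x :=
          fun x hx => hp x ((List.drop_sublist _ _).subset hx)
        rw [hset, rm_rep_zero z _ _ hdroppos]
        have hq : ∀ x ∈ p.take t ++ p.drop (t + 1), 0 < x := by
          intro x hx
          rcases List.mem_append.mp hx with h | h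
          · exact hp x ((List.take_sublist _ _).subset h)
          · exact hdroppos x h
        have hqsum : (p.take t ++ p.drop (t + 1)).sum = s := by
          have h1 : (p.set t (p.getD t 0 - 1)).sum = p.sum - 1 := set_sum p t ht hpos
          rw [hc, hset] at h1
          simp only [List.sum_append, List.sum_cons] at h1 ⊢
          omega
        rw [ih z _ hq hqsum, M_erase p t ht, ← hset]
      · -- entry is > 1 : an old zero is removed (if any)
        have hqpos : ∀ x ∈ p.set t (p.getD t 0 - 1), 0 < x := by
          intro x hx
          rcases List.mem_or_eq_of_mem_set hx with h | h
          · exact hp x h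
          · omega
        rw [rm_rep_pos _ _ hqpos]
        have hqsum : (p.set t (p.getD t 0 - 1)).sum = s := by
          rw [set_sum p t ht hpos]; omega
        exact ih (z - 1) _ hqpos hqsum


/-- If a composition `k` of `n` is right-justified (no index with a positive entry occurs
before an index with a zero entry), then the asymmetric multinomial coefficient equals the
ordinary multinomial coefficient `n! / (k_1! ⋯ k_n!)`. -/
theorem asym_right_justified (n : ℕ) (k : List ℕ)
    (hlen : k.length = n) (hsum : k.sum = n)
    (hrj : ∀ i j, i < j → j < k.length → 0 < k.getD i 0 → k.getD j 0 ≠ 0) :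
    asym k = Nat.multinomial (Finset.range n) (fun i => k.getD i 0) := by
  subst hlen
  rw [multinomial_range_eq]
  obtain ⟨z, p, hk, hp⟩ : ∃ z p, k = List.replicate z 0 ++ p ∧ ∀ x ∈ p, 0 < x := by
    refine ⟨(k.takeWhile (· == 0)).length, k.dropWhile (· == 0), ?_, ?_⟩
    · conv_lhs => rw [← List.takeWhile_append_dropWhile (p := (· == 0)) (l := k)]
      congr 1
      apply List.eq_replicate_of_mem
      intro b hb
      simpa using List.mem_takeWhile_imp hb
    · set z := (k.takeWhile (· == 0)).length with hz
      have hk : k = List.replicate z 0 ++ k.dropWhile (· == 0) := by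
        conv_lhs => rw [← List.takeWhile_append_dropWhile (p := (· == 0)) (l := k)]
        congr 1
        apply List.eq_replicate_of_mem
        intro b hb
        simpa using List.mem_takeWhile_imp hb
      cases hp0 : k.dropWhile (· == 0) with
      | nil => intro x hx; simp [hp0] at hx
      | cons a rest =>
          have hne : k.dropWhile (· == 0) ≠ [] := by rw [hp0]; simp
          have ha : 0 < a := by
            have := List.head_dropWhile_not (· == 0) hne
            simp only [hp0] at this
            simp only [List.head_cons] at this
            simpa using Nat.pos_of_ne_zero (by simpa using this)
          rw [hp0] at hk
          intro x hx
          rw [← hp0] at hx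
          obtain ⟨t, htlt, rfl⟩ := List.mem_iff_getElem.mp hx
          cases t with
          | zero =>
              have h0 : (k.dropWhile (· == 0))[0] = a := by
                simp [hp0]
              rw [h0]; exact ha
          | succ t' =>
              simp only [hp0] at htlt ⊢
              have hgetz : k.getD z 0 = a := by
                rw [hk]
                have := getD_rep z 0 (a :: rest)
                rw [Nat.add_zero] at this
                rw [this]
                rfl
              have hlt : z + (t' + 1) < k.length := by
                rw [hk]; simp only [List.length_append, List.length_replicate]
                simpa using htlt
              have hne0 := hrj z (z + (t' + 1)) (by omega) hlt (by rw [hgetz]; exact ha)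
              rw [hk, getD_rep, List.getD_eq_getElem _ _ htlt] at hne0
              omega
  subst hk
  have hpsum : p.sum = (List.replicate z 0 ++ p).sum := by simp
  have hfuel : (List.replicate z 0 ++ p).length = p.sum := by
    rw [hpsum, hsum]
  have hMk : M (List.replicate z 0 ++ p) = M p := by
    rw [M, M]
    congr 1
    · rw [List.sum_append, List.sum_replicate]; simp
    · rw [List.map_append, List.prod_append, List.map_replicate]
      simp [Nat.factorial]
  rw [hMk, asym, hfuel]
  exact main_lemma p.sum z p hp rfl
end

section
/- The asymmetric multinomial coefficient A(k) is nonzero if and only if k is reverse-Catalan, i.e., for all i with 1 ≤ i ≤ n, k_{n-i+1} + ... + k_n ≥ i. -/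
namespace AsymRC

/-- Prefix-sum (reverse-Catalan) predicate on reversed lists. -/
def P (r : List ℕ) : Prop := ∀ s, 1 ≤ s → s ≤ r.length → s ≤ (r.take s).sum

lemma sum_set_add (l : List ℕ) (t v : ℕ) (h : t < l.length) :
    (l.set t v).sum + l[t] = l.sum + v := by
  have hd1 : (l.drop t).sum = l[t] + (l.drop (t+1)).sum := by
    rw [List.drop_eq_getElem_cons h, List.sum_cons]
  have hd2 : (l.take t).sum + (l.drop t).sum = l.sum := by
    rw [← List.sum_append, List.take_append_drop]
  rw [List.set_eq_take_cons_drop _ h]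
  simp [List.sum_append]
  omega

lemma le_indexOf_zero (l : List ℕ) (t : ℕ) (h : t < l.length) (he : l[t] = 0) :
    l.idxOf 0 ≤ t := by
  induction l generalizing t with
  | nil => simp at h
  | cons a l ih =>
    rcases t with _ | t
    · simp at he; simp [he, List.idxOf_cons]
    · rcases eq_or_ne a 0 with rfl | ha
      · simp [List.idxOf_cons]
      · simp only [List.getElem_cons_succ] at he
        have := ih t (by simpa using Nat.lt_of_succ_lt_succ h) he
        simp [List.idxOf_cons, ha]
        omega

lemma pos_lt_indexOf (l : List ℕ) (t : ℕ) (ht : t < l.idxOf 0) (h : t < l.length) :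
    1 ≤ l[t] := by
  by_contra hc
  have : l[t] = 0 := by omega
  have := le_indexOf_zero l t h this
  omega

lemma take_set_of_le (l : List ℕ) (t v s : ℕ) (hs : s ≤ t) :
    (l.set t v).take s = l.take s := by
  apply List.ext_getElem
  · simp
  · intro i h1 h2
    simp only [List.getElem_take, List.getElem_set]
    have h3 : i < s := by simp at h1; omega
    rw [if_neg (by omega)]

lemma take_set_of_lt (l : List ℕ) (t v s : ℕ) (hs : t < s) :
    (l.set t v).take s = (l.take s).set t v := by
  apply List.ext_getElem
  · simp
  · intro i h1 h2
    simp only [List.getElem_take, List.getElem_set]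

/-- Positivity of entries below `z` gives growth of prefix sums. -/
lemma tight (r : List ℕ) (z : ℕ) (hpos : ∀ i, i < z → (hi : i < r.length) → 1 ≤ r[i])
    (a b : ℕ) (hab : a ≤ b) (hbz : b ≤ z) (hbl : b ≤ r.length) :
    (r.take a).sum + (b - a) ≤ (r.take b).sum := by
  have hb : b = a + (b - a) := by omega
  rw [hb, List.take_add, List.sum_append]
  have hlen : (List.take (b - a) (List.drop a r)).length = b - a := by
    simp; omega
  have : (List.take (b - a) (List.drop a r)).length ≤ (List.take (b - a) (List.drop a r)).sum := by
    apply List.length_le_sum_of_one_le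
    intro x hx
    rw [List.mem_iff_getElem] at hx
    obtain ⟨i, hi, rfl⟩ := hx
    rw [List.getElem_take, List.getElem_drop]
    apply hpos
    all_goals (first | (rw [hlen] at hi; omega) | omega)
  omega

/-- Core structural lemma about one step of the recursion, on reversed lists. -/
lemma step_main (r : List ℕ) (t : ℕ) (m : List ℕ)
    (hm : m = (r.set t (r.getD t 0 - 1)).erase 0)
    (hs : r.sum = r.length) (htz : t < r.idxOf 0) :
    ∃ p, t ≤ p ∧ p < r.length ∧ m.length + 1 = r.length ∧
      (∀ s, s ≤ p → (m.take s).sum ≤ (r.take s).sum ∧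
        (r.take s).sum ≤ (m.take s).sum + (if t < s then 1 else 0)) ∧
      (∀ s, p ≤ s → (r.take (s+1)).sum = (m.take s).sum + 1) ∧
      (∀ s, t < s → s ≤ p → s + 1 ≤ (r.take s).sum) := by
  have hzn : r.idxOf 0 ≤ r.length := List.idxOf_le_length
  set n := r.length with hn
  set z := r.idxOf 0 with hz
  have htn : t < n := lt_of_lt_of_le htz hzn
  have hpos : ∀ i, i < z → ∀ (hi : i < r.length), 1 ≤ r[i] :=
    fun i hi hil => pos_lt_indexOf r i hi hil
  have hg1 : 1 ≤ r[t] := hpos t htz htn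
  have hgd : r.getD t 0 = r[t] := List.getD_eq_getElem r 0 htn
  rcases eq_or_lt_of_le hg1 with hg | hg
  · -- case r[t] = 1 : the zero created at position t is erased
    have hv0 : r.getD t 0 - 1 = 0 := by omega
    rw [hv0] at hm
    have hset : r.set t 0 = r.take t ++ 0 :: r.drop (t+1) :=
      List.set_eq_take_cons_drop _ htn
    have hnotmem : (0:ℕ) ∉ r.take t := by
      intro hmem
      rw [List.mem_iff_getElem] at hmem
      obtain ⟨i, hi, hie⟩ := hmem
      have hit : i < t := by simp [List.length_take] at hi; omega
      rw [List.getElem_take] at hie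
      have := hpos i (by omega) (by omega)
      omega
    have hmA : m = r.take t ++ r.drop (t+1) := by
      rw [hm, hset, List.erase_append_right _ hnotmem, List.erase_cons_head]
    have hlt : (r.take t).length = t := by simp [List.length_take]; omega
    have hlen : m.length + 1 = n := by
      rw [hmA]; simp [List.length_take]; omega
    refine ⟨t, le_refl t, htn, hlen, ?_, ?_, ?_⟩
    · intro s hst
      have hmt : m.take s = r.take s := by
        rw [hmA, List.take_append, hlt,
          Nat.sub_eq_zero_of_le hst, List.take_zero, List.append_nil,
          List.take_take, min_eq_left hst]
      rw [hmt, if_neg (by omega)]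
      omega
    · intro s hts
      have h1 : m.take s = r.take t ++ (r.drop (t+1)).take (s - t) := by
        rw [hmA, List.take_append, hlt,
          List.take_of_length_le (by rw [hlt]; exact hts)]
      have h2 : r.take (s+1) = r.take t ++ r[t] :: (r.drop (t+1)).take (s - t) := by
        have he : s + 1 = t + (s - t + 1) := by omega
        rw [he, List.take_add, List.drop_eq_getElem_cons htn, List.take_succ_cons]
      rw [h1, h2]
      simp [List.sum_append]
      omega
    · intro s h1 h2; omega
  · -- case r[t] ≥ 2 : the first zero of r (at position z) is erased
    have hgg : 2 ≤ r[t] := hg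
    have hzn' : z < n := by
      by_contra hc
      have hzz : z = n := by omega
      have e0 : (r.take 0).sum + (t - 0) ≤ (r.take t).sum :=
        tight r z hpos 0 t (by omega) (by omega) (by omega)
      have e1 : (r.take (t+1)).sum = (r.take t).sum + r[t] :=
        List.sum_take_succ r t htn
      have e2 : (r.take (t+1)).sum + (n - (t+1)) ≤ (r.take n).sum :=
        tight r z hpos (t+1) n (by omega) (by omega) (by omega)
      have e3 : r.take n = r := List.take_of_length_le (le_of_eq hn.symm)
      rw [e3, hs] at e2
      simp at e0
      omega
    have hrz : r[z] = 0 := List.getElem_idxOf hzn'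
    rw [hgd] at hm
    set w := r[t] - 1 with hw
    set C := r.take z with hC
    set D := r.drop (z+1) with hD
    have hCl : C.length = z := by rw [hC]; simp [List.length_take]; omega
    have e1 : r = C ++ r.drop z := (List.take_append_drop z r).symm
    have hset : r.set t w = C.set t w ++ r.drop z := by
      conv_lhs => rw [e1]
      rw [List.set_append, if_pos (by rw [hCl]; exact htz)]
    have hdz : r.drop z = 0 :: D := by
      rw [List.drop_eq_getElem_cons hzn', hrz, hD]
    have hnotmem : (0:ℕ) ∉ C.set t w := by
      intro hmem
      rw [List.mem_iff_getElem] at hmem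
      obtain ⟨i, hi, hie⟩ := hmem
      have hiz : i < z := by rw [List.length_set, hCl] at hi; exact hi
      rw [List.getElem_set] at hie
      by_cases hti : t = i
      · rw [if_pos hti] at hie; omega
      · rw [if_neg hti] at hie
        have hCi : C[i] = r[i] := List.getElem_take
        rw [hCi] at hie
        have := hpos i hiz (by omega)
        omega
    have hmB : m = C.set t w ++ D := by
      rw [hm, hset, hdz, List.erase_append_right _ hnotmem, List.erase_cons_head]
    have hCt : C[t]'(by omega) = r[t] := List.getElem_take
    have hCsum : (C.set t w).sum + 1 = C.sum := by
      have := sum_set_add C t w (by omega)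
      rw [hCt] at this
      omega
    have hC'l : (C.set t w).length = z := by rw [List.length_set, hCl]
    have hlen : m.length + 1 = n := by
      rw [hmB]; simp [hC'l, hD]; omega
    refine ⟨z, le_of_lt htz, hzn', hlen, ?_, ?_, ?_⟩
    · intro s hsz
      have hmt : m.take s = (C.set t w).take s := by
        rw [hmB, List.take_append, hC'l,
          Nat.sub_eq_zero_of_le hsz, List.take_zero, List.append_nil]
      have hrt : r.take s = C.take s := by
        rw [hC, List.take_take, min_eq_left hsz]
      by_cases hts : t < s
      · have hcs : (C.set t w).take s = (C.take s).set t w := take_set_of_lt C t w s hts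
        have hl2 : t < (C.take s).length := by
          simp [List.length_take]; omega
        have := sum_set_add (C.take s) t w hl2
        have hgel : (C.take s)[t]'hl2 = C[t]'(by omega) := List.getElem_take
        rw [hgel, hCt] at this
        rw [hmt, hrt, hcs, if_pos hts]
        omega
      · have hcs : (C.set t w).take s = C.take s := take_set_of_le C t w s (by omega)
        rw [hmt, hrt, hcs, if_neg hts]
        omega
    · intro s hzs
      have h1 : m.take s = C.set t w ++ D.take (s - z) := by
        rw [hmB, List.take_append, hC'l,
          List.take_of_length_le (by rw [hC'l]; exact hzs)]
      have h2 : r.take (s+1) = C ++ (0:ℕ) :: D.take (s - z) := by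
        have he : s + 1 = z + (s - z + 1) := by omega
        conv_lhs => rw [e1]
        rw [List.take_append, hCl,
          List.take_of_length_le (by rw [hCl]; omega), hdz]
        have he2 : s + 1 - z = (s - z) + 1 := by omega
        rw [he2, List.take_succ_cons]
      rw [h1, h2]
      simp [List.sum_append]
      omega
    · intro s hts hsz
      have e0 : (r.take 0).sum + (t - 0) ≤ (r.take t).sum :=
        tight r z hpos 0 t (by omega) (by omega) (by omega)
      have e1' : (r.take (t+1)).sum = (r.take t).sum + r[t] :=
        List.sum_take_succ r t htn
      have e2 : (r.take (t+1)).sum + (s - (t+1)) ≤ (r.take s).sum :=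
        tight r z hpos (t+1) s (by omega) (by omega) (by omega)
      simp at e0
      omega

lemma step_len_sum (r : List ℕ) (t : ℕ) (m : List ℕ)
    (hm : m = (r.set t (r.getD t 0 - 1)).erase 0)
    (hs : r.sum = r.length) (htz : t < r.idxOf 0) :
    m.length + 1 = r.length ∧ m.sum + 1 = r.sum := by
  obtain ⟨p, _, hpn, hlen, _, hii, _⟩ := step_main r t m hm hs htz
  refine ⟨hlen, ?_⟩
  have h := hii m.length (by omega)
  rw [List.take_of_length_le (show r.length ≤ m.length + 1 by omega),
    List.take_of_length_le (le_refl m.length)] at h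
  omega

lemma backward (r : List ℕ) (t : ℕ) (hs : r.sum = r.length) (htz : t < r.idxOf 0)
    (hP : P ((r.set t (r.getD t 0 - 1)).erase 0)) : P r := by
  obtain ⟨p, htp, hpn, hlen, hi, hii, _⟩ := step_main r t _ rfl hs htz
  intro s hs1 hsn
  by_cases hsp : s ≤ p
  · have h1 := (hi s hsp).1
    have h2 := hP s hs1 (by omega)
    omega
  · have h3 := hii (s-1) (by omega)
    have he : s - 1 + 1 = s := by omega
    rw [he] at h3
    have h4 : s - 1 ≤ (((r.set t (r.getD t 0 - 1)).erase 0).take (s-1)).sum := by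
      by_cases h0 : 1 ≤ s - 1
      · exact hP _ h0 (by omega)
      · omega
    omega

lemma forward (r : List ℕ) (hs : r.sum = r.length) (hn : 1 ≤ r.length) (hP : P r) :
    1 ≤ r.idxOf 0 ∧ P ((r.set 0 (r.getD 0 0 - 1)).erase 0) := by
  have hz1 : 1 ≤ r.idxOf 0 := by
    by_contra hc
    have hz0 : r.idxOf 0 = 0 := by omega
    have h1 := hP 1 (le_refl 1) hn
    have ht1 : (r.take 1).sum = r[0]'(by omega) := by
      have hh := List.sum_take_succ r 0 (by omega)
      simpa using hh
    have h0 : r[0]'(by omega) = 0 := by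
      have hh := List.getElem_idxOf (xs := r) (x := (0:ℕ)) (by omega)
      simpa [hz0] using hh
    omega
  refine ⟨hz1, ?_⟩
  obtain ⟨p, htp, hpn, hlen, hi, hii, hiii⟩ := step_main r 0 _ rfl hs (by omega)
  intro s hs1 hsm
  by_cases hsp : s ≤ p
  · have h1 := (hi s hsp).2
    rw [if_pos (by omega : 0 < s)] at h1
    have h2 := hiii s (by omega) hsp
    omega
  · have h3 := hii s (by omega)
    have h4 := hP (s+1) (by omega) (by omega)
    omega

lemma reverse_set (l : List ℕ) (i v : ℕ) (h : i < l.length) :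
    (l.set i v).reverse = l.reverse.set (l.length - 1 - i) v := by
  apply List.ext_getElem
  · simp
  · intro j h1 h2
    have hj : j < l.length := by simpa using h2
    rw [List.getElem_reverse]
    simp only [List.length_set, List.getElem_set, List.getElem_reverse]
    by_cases hc : i = l.length - 1 - j
    · rw [if_pos hc, if_pos (by omega)]
    · rw [if_neg hc, if_neg (by omega)]

lemma main : ∀ (n : ℕ) (k : List ℕ), k.length = n → k.sum = n → (asym k ≠ 0 ↔ P k.reverse) := by
  intro n
  induction n with
  | zero =>
    intro k hlen _
    rw [List.length_eq_zero_iff] at hlen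
    subst hlen
    constructor
    · intro _ s h1 h2
      simp at h2
      omega
    · intro _
      simp [asym, asymAux]
  | succ n ih =>
    intro k hlen hsum
    have hk : k ≠ [] := by intro h; subst h; simp at hlen
    obtain ⟨a, l, rfl⟩ := List.exists_cons_of_ne_nil hk
    have h0 : asymAux (n+1) (a::l) =
        ∑ j ∈ Finset.Icc (maxzero (a::l) + 1) ((a::l).length), asymAux n (stepComp (a::l) j) := by
      rfl
    have hasym : asym (a::l) =
        ∑ j ∈ Finset.Icc (maxzero (a::l) + 1) (n+1), asymAux n (stepComp (a::l) j) := by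
      rw [asym, hlen, h0, hlen]
    set r := (a::l).reverse with hr
    have hrlen : r.length = n + 1 := by rw [hr, List.length_reverse, hlen]
    have hrsum : r.sum = n + 1 := by rw [hr, List.sum_reverse, hsum]
    set z := r.idxOf 0 with hz
    have hzle : z ≤ n+1 := hrlen ▸ List.idxOf_le_length
    have hmax : maxzero (a::l) = (n+1) - z := by
      rw [maxzero, hlen, ← hr, ← hz]
    have key : ∀ j, maxzero (a::l) + 1 ≤ j → j ≤ n + 1 →
        (asymAux n (stepComp (a::l) j) ≠ 0 ↔
          P ((r.set (n+1-j) (r.getD (n+1-j) 0 - 1)).erase 0)) := by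
      intro j hj1 hj2
      rw [hmax] at hj1
      have htzj : n+1-j < z := by omega
      have hb1 : j - 1 < (a::l).length := by rw [hlen]; omega
      have hb2 : n+1-j < r.length := by rw [hrlen]; omega
      have hgd : (a::l).getD (j-1) 0 = r.getD (n+1-j) 0 := by
        rw [List.getD_eq_getElem _ _ hb1, List.getD_eq_getElem _ _ hb2]
        show (a::l)[j - 1] = (a::l).reverse[n+1-j]'(by rw [hrlen] at hb2; have hx := hlen; simp at hx; simp only [List.length_reverse, List.length_cons]; omega)
        rw [List.getElem_reverse]
        congr 1
        simp only [hlen]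
        omega
      have hstep : (stepComp (a::l) j).reverse =
          (r.set (n+1-j) (r.getD (n+1-j) 0 - 1)).erase 0 := by
        rw [stepComp, rmRightZero, List.reverse_reverse, hgd]
        congr 1
        rw [reverse_set _ _ _ hb1, ← hr]
        congr 1
        simp only [hlen]
        omega
      have hls := step_len_sum r (n+1-j) _ rfl (by rw [hrsum, hrlen]) htzj
      have hsc_len : (stepComp (a::l) j).length = n := by
        have h1 : (stepComp (a::l) j).reverse.length = n := by
          rw [hstep]; omega
        rw [List.length_reverse] at h1
        exact h1
      have hsc_sum : (stepComp (a::l) j).sum = n := by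
        have h1 : (stepComp (a::l) j).reverse.sum = n := by
          rw [hstep]; omega
        rw [List.sum_reverse] at h1
        exact h1
      have he : asymAux n (stepComp (a::l) j) = asym (stepComp (a::l) j) := by
        rw [asym, hsc_len]
      rw [he, ih _ hsc_len hsc_sum, ← hstep]
    rw [hasym]
    constructor
    · intro hne
      obtain ⟨j, hjmem, hjne⟩ := Finset.exists_ne_zero_of_sum_ne_zero hne
      rw [Finset.mem_Icc] at hjmem
      have hPm := (key j hjmem.1 hjmem.2).mp hjne
      have htzj : n+1-j < z := by
        have := hjmem.1; rw [hmax] at this; omega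
      exact backward r (n+1-j) (by rw [hrsum, hrlen]) htzj hPm
    · intro hPr
      obtain ⟨hz1, hPm⟩ := forward r (by rw [hrsum, hrlen]) (by rw [hrlen]; omega) hPr
      intro hsum0
      rw [Finset.sum_eq_zero_iff] at hsum0
      have hmem : n+1 ∈ Finset.Icc (maxzero (a::l) + 1) (n+1) := by
        rw [Finset.mem_Icc, hmax]
        omega
      have hzero := hsum0 _ hmem
      have hkey := key (n+1) (by rw [hmax]; omega) (le_refl _)
      rw [show n+1-(n+1) = 0 from by omega] at hkey
      exact (hkey.mpr hPm) hzero

end AsymRC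

/-- The asymmetric multinomial coefficient of a composition `k` of `n` is nonzero if and
only if `k` is reverse-Catalan, i.e. every suffix of length `i` sums to at least `i`. -/
theorem asym_ne_zero_iff_reverseCatalan (n : ℕ) (k : List ℕ)
    (hlen : k.length = n) (hsum : k.sum = n) :
    asym k ≠ 0 ↔ ∀ i, 1 ≤ i → i ≤ n → i ≤ (k.drop (n - i)).sum := by
  rw [AsymRC.main n k hlen hsum]
  simp only [AsymRC.P]
  constructor
  · intro h i h1 h2
    have hh := h i h1 (by rw [List.length_reverse, hlen]; exact h2)
    rw [List.take_reverse, List.sum_reverse, hlen] at hh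
    exact hh
  · intro h i h1 h2
    rw [List.take_reverse, List.sum_reverse, hlen]
    exact h i h1 (by rw [List.length_reverse, hlen] at h2; exact h2)
end

section
/- If a composition k of n is reverse-Catalan, then every composition k^{(j)} appearing in the asymmetric multinomial recursion (for j ranging from i+1 to n, where i is the position of the rightmost zero of k, and k_j ≥ 1) is a reverse-Catalan composition of n-1. -/
/-- Taking at most `q` elements commutes with erasing index `q`. -/
lemma take_eraseIdx_of_le {α : Type*} :
    ∀ (l : List α) (q i : ℕ), i ≤ q → (l.eraseIdx q).take i = l.take i := by
  intro l
  induction l with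
  | nil => intro q i _; simp
  | cons x xs ih =>
    intro q i hiq
    cases q with
    | zero => interval_cases i; simp
    | succ q =>
      cases i with
      | zero => simp
      | succ i => simp [List.eraseIdx, ih q i (by omega)]

/-- Sum of a long prefix after erasing index `q`. -/
lemma sum_take_eraseIdx :
    ∀ (l : List ℕ) (q i : ℕ), q < l.length → q < i →
      ((l.eraseIdx q).take i).sum + l.getD q 0 = (l.take (i + 1)).sum := by
  intro l
  induction l with
  | nil => intro q i h _; simp at h
  | cons x xs ih =>
    intro q i hq hqi
    cases q with
    | zero =>
      cases i with
      | zero => omega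
      | succ i => simp [List.eraseIdx]; ring
    | succ q =>
      cases i with
      | zero => omega
      | succ i =>
        have := ih q i (by simpa using hq) (by omega)
        simp only [List.eraseIdx, List.take_succ_cons, List.sum_cons, List.getD_cons_succ]
        omega

/-- Entries before the first `0` are positive, so a short prefix sum is large. -/
lemma le_sum_take_of_le_indexOf :
    ∀ (l : List ℕ) (i : ℕ), i ≤ List.idxOf 0 l → i ≤ l.length → i ≤ (l.take i).sum := by
  intro l
  induction l with
  | nil => intro i _ h; simpa using h
  | cons x xs ih =>
    intro i hi hl
    cases i with
    | zero => simp
    | succ i =>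
      by_cases hx : x = 0
      · subst hx; simp [List.idxOf_cons] at hi
      · have hx1 : 1 ≤ x := Nat.one_le_iff_ne_zero.mpr hx
        have hi' : i ≤ List.idxOf 0 xs := by
          rw [List.idxOf_cons] at hi
          simp [show (x == 0) = false by simpa using hx] at hi
          omega
        have := ih i hi' (by simpa using Nat.succ_le_succ_iff.mp hl)
        simp only [List.take_succ_cons, List.sum_cons]
        omega

/-- A list of positive naturals has sum at least its length. -/
lemma length_le_sum_of_not_mem_zero :
    ∀ (l : List ℕ), (0 : ℕ) ∉ l → l.length ≤ l.sum := by
  intro l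
  induction l with
  | nil => simp
  | cons x xs ih =>
    intro h
    simp only [List.mem_cons, not_or] at h
    have h1 : 1 ≤ x := Nat.one_le_iff_ne_zero.mpr (fun hx => h.1 hx.symm)
    have := ih h.2
    simp only [List.length_cons, List.sum_cons]
    omega

/-- Sum after setting one entry. -/
lemma sum_set_getD :
    ∀ (l : List ℕ) (p a : ℕ), p < l.length → (l.set p a).sum + l.getD p 0 = l.sum + a := by
  intro l
  induction l with
  | nil => intro p a h; simp at h
  | cons x xs ih =>
    intro p a hp
    cases p with
    | zero => simp; ring
    | succ p =>
      have := ih p a (by simpa using hp)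
      simp only [List.set, List.sum_cons, List.getD_cons_succ]
      omega

/-- Setting an entry decreases a suffix sum by at most the decrease of that entry. -/
lemma sum_drop_le_sum_drop_set :
    ∀ (l : List ℕ) (p a d : ℕ),
      (l.drop d).sum ≤ ((l.set p a).drop d).sum + (l.getD p 0 - a) := by
  intro l
  induction l with
  | nil => intro p a d; simp
  | cons x xs ih =>
    intro p a d
    cases p with
    | zero =>
      cases d with
      | zero => simp; omega
      | succ d => simp
    | succ p =>
      cases d with
      | zero =>
        have := ih p a 0
        simp only [List.set, List.drop_zero, List.sum_cons, List.getD_cons_succ] at *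
        omega
      | succ d =>
        have := ih p a d
        simpa only [List.set, List.drop_succ_cons, List.getD_cons_succ] using this

/-- Suffix sums as prefix sums of the reverse. -/
lemma sum_drop_eq_sum_take_reverse (l : List ℕ) (d : ℕ) :
    (l.drop d).sum = (l.reverse.take (l.length - d)).sum := by
  by_cases hd : d ≤ l.length
  · have h1 : l.reverse = (l.drop d).reverse ++ (l.take d).reverse := by
      rw [← List.reverse_append, List.take_append_drop]
    have h2 : (l.drop d).reverse.length = l.length - d := by
      simp [List.length_drop]
    rw [h1, ← h2, List.take_left, List.sum_reverse]
  · rw [List.drop_eq_nil_of_le (by omega), Nat.sub_eq_zero_of_le (by omega)]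
    simp

/-- If `k` is a reverse-Catalan composition of `n`, then each composition `k^{(j)}`
appearing in the asymmetric multinomial recursion (for `maxzero k < j ≤ n` with `k_j ≥ 1`)
is a reverse-Catalan composition of `n - 1`. -/
theorem stepComp_reverseCatalan (n : ℕ) (k : List ℕ)
    (hlen : k.length = n) (hsum : k.sum = n)
    (hrc : ∀ i, 1 ≤ i → i ≤ n → i ≤ (k.drop (n - i)).sum)
    (j : ℕ) (hj1 : maxzero k < j) (hj2 : j ≤ n) (hkj : 1 ≤ k.getD (j - 1) 0) :
    (stepComp k j).length = n - 1 ∧ (stepComp k j).sum = n - 1 ∧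
      ∀ i, 1 ≤ i → i ≤ n - 1 → i ≤ ((stepComp k j).drop (n - 1 - i)).sum := by
  have hj0 : 1 ≤ j := by omega
  have hn1 : 1 ≤ n := le_trans hj0 hj2
  have hjlt : j - 1 < k.length := by omega
  set g := k.getD (j - 1) 0 with hg
  set l' := k.set (j - 1) (g - 1) with hl'
  have hstep : stepComp k j = (l'.reverse.erase 0).reverse := rfl
  have hl'len : l'.length = n := by simp [hl', hlen]
  have hl'sum : l'.sum = n - 1 := by
    have := sum_set_getD k (j - 1) (g - 1) hjlt
    rw [← hg, ← hl'] at this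
    omega
  set r' := l'.reverse with hr'
  have hr'len : r'.length = n := by simp [hr', hl'len]
  have hr'sum : r'.sum = n - 1 := by rw [hr', List.sum_reverse]; exact hl'sum
  have h0mem : (0 : ℕ) ∈ r' := by
    by_contra h0
    have := length_le_sum_of_not_mem_zero r' h0
    omega
  set q := List.idxOf 0 r' with hq
  have hqlt : q < n := by rw [← hr'len]; exact List.idxOf_lt_length_iff.mpr h0mem
  have hr'q : r'.getD q 0 = 0 := by
    rw [List.getD_eq_getElem r' 0 (by omega)]
    exact List.getElem_idxOf (by omega)
  have herase : r'.erase 0 = r'.eraseIdx q := (List.eraseIdx_idxOf_eq_erase 0 r').symm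
  have hlen' : (stepComp k j).length = n - 1 := by
    rw [hstep, List.length_reverse]
    have := List.length_erase_add_one h0mem
    omega
  have hsum' : (stepComp k j).sum = n - 1 := by
    rw [hstep, List.sum_reverse]
    have hperm := List.perm_cons_erase h0mem
    have := hperm.sum_eq
    simp only [List.sum_cons, Nat.zero_add] at this
    omega
  refine ⟨hlen', hsum', ?_⟩
  intro i hi1 hi2
  have hel : (r'.erase 0).length = n - 1 := by
    have := List.length_erase_add_one h0mem
    omega
  -- rewrite the suffix sum of stepComp as a prefix sum of r'.erase 0
  have hds : ((stepComp k j).drop (n - 1 - i)).sum = ((r'.erase 0).take i).sum := by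
    rw [hstep, sum_drop_eq_sum_take_reverse, List.reverse_reverse]
    congr 2
    rw [List.length_reverse, hel]
    omega
  rw [hds, herase]
  by_cases hcase : i ≤ q
  · rw [take_eraseIdx_of_le r' q i hcase]
    exact le_sum_take_of_le_indexOf r' i hcase (by omega)
  · have hqi : q < i := by omega
    have hkey := sum_take_eraseIdx r' q i (by omega) hqi
    rw [hr'q, Nat.add_zero] at hkey
    rw [hkey]
    have htk : (r'.take (i + 1)).sum = (l'.drop (n - (i + 1))).sum := by
      rw [sum_drop_eq_sum_take_reverse l' (n - (i + 1)), hl'len, ← hr']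
      congr 2
      omega
    rw [htk]
    have h1 := sum_drop_le_sum_drop_set k (j - 1) (g - 1) (n - (i + 1))
    rw [← hg, ← hl'] at h1
    have h2 := hrc (i + 1) (by omega) (by omega)
    have hgg : g - (g - 1) = 1 := by omega
    rw [hgg] at h1
    omega
end

section
/- The number of permutations of {1,...,n} avoiding the vincular pattern 23-1 equals the nth Bell number (equivalently, the set Cat^ω(1,...,1) of caterpillar slide trees is counted by the Bell numbers). -/
def good : List ℕ → Bool
  | [] => true
  | [_] => true
  | x :: y :: t => ((!(decide (x < y))) || t.all (fun z => !(decide (z < x)))) && good (y :: t)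

lemma good_cons_cons (x y : ℕ) (t : List ℕ) :
    good (x :: y :: t) = true ↔ ((¬ x < y) ∨ ∀ z ∈ t, ¬ z < x) ∧ good (y :: t) = true := by
  simp [good, List.all_eq_true]

lemma good_append (p t : List ℕ) (m : ℕ) (hp : ∀ x ∈ p, m < x) (ht : ∀ x ∈ t, m ≤ x) :
    good (p ++ m :: t) = true ↔ List.Chain' (· ≥ ·) p ∧ good t = true := by
  induction p with
  | nil =>
    simp only [List.nil_append, List.Chain', List.isChain_nil, true_and]
    cases t with
    | nil => simp [good]
    | cons y t' =>
      rw [good_cons_cons]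
      have : ∀ z ∈ t', ¬ z < m := fun z hz => not_lt.mpr (ht z (List.mem_cons_of_mem _ hz))
      tauto
  | cons x p' ih =>
    have hx : m < x := hp x List.mem_cons_self
    have hp' : ∀ z ∈ p', m < z := fun z hz => hp z (List.mem_cons_of_mem _ hz)
    cases p' with
    | nil =>
      simp only [List.cons_append, List.nil_append, List.isChain_singleton, true_and]
      rw [good_cons_cons]
      have h1 : ¬ x < m := not_lt.mpr hx.le
      have := ih (by simp)
      simp only [List.nil_append] at this
      tauto
    | cons y p'' =>
      simp only [List.cons_append] at *
      rw [good_cons_cons, List.Chain', List.isChain_cons_cons]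
      have hm : m ∈ p'' ++ m :: t := by simp
      constructor
      · rintro ⟨hd, hg⟩
        have hxy : ¬ x < y := by
          rcases hd with h | h
          · exact h
          · exact absurd (h m hm) (by simpa using hx)
        exact ⟨⟨not_lt.mp hxy, ((ih hp').mp hg).1⟩, ((ih hp').mp hg).2⟩
      · rintro ⟨⟨hxy, hc⟩, hg⟩
        exact ⟨Or.inl (not_lt.mpr hxy), (ih hp').mpr ⟨hc, hg⟩⟩

lemma good_iff (l : List ℕ) :
    good l = true ↔ ∀ i j : ℕ, ∀ _hij : i + 1 < j, ∀ hj : j < l.length,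
      ¬(l[j] < l[i]'(by omega) ∧ l[i]'(by omega) < l[i+1]'(by omega)) := by
  induction l with
  | nil =>
    constructor
    · intro _ i j h hj; simp at hj
    · intro _; rfl
  | cons x rest ih =>
    cases rest with
    | nil =>
      constructor
      · intro _ i j h hj; simp at hj; omega
      · intro _; rfl
    | cons y t =>
      rw [good_cons_cons, ih]
      constructor
      · rintro ⟨h1, h2⟩ i j hij hj
        cases i with
        | zero =>
          obtain ⟨k, rfl⟩ : ∃ k, j = k + 2 := ⟨j - 2, by omega⟩
          simp only [List.getElem_cons_succ, List.getElem_cons_zero]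
          have hk : k < t.length := by
            simp only [List.length_cons] at hj; omega
          rcases h1 with h | h
          · tauto
          · have : ¬ t[k] < x := h t[k] (List.getElem_mem _)
            tauto
        | succ i =>
          obtain ⟨k, rfl⟩ : ∃ k, j = k + 1 := ⟨j - 1, by omega⟩
          simp only [List.getElem_cons_succ]
          exact h2 i k (by omega) (by simpa using hj)
      · intro h
        refine ⟨?_, fun i j hij hj => ?_⟩
        · by_cases hxy : x < y
          · refine Or.inr fun z hz => ?_
            obtain ⟨k, hk, rfl⟩ := List.mem_iff_getElem.mp hz
            have := h 0 (k + 2) (by omega) (by simpa using by omega)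
            simpa [hxy] using this
          · exact Or.inl hxy
        · have := h (i + 1) (j + 1) (by omega) (by simpa using hj)
          simpa using this

lemma good_nil : good [] = true := rfl

def perms (V : Finset ℕ) : Finset (List ℕ) := (V.sort (· ≤ ·)).permutations.toFinset

lemma mem_perms {V : Finset ℕ} {l : List ℕ} :
    l ∈ perms V ↔ l.Nodup ∧ l.toFinset = V := by
  rw [perms, List.mem_toFinset, List.mem_permutations]
  constructor
  · intro h
    exact ⟨h.symm.nodup (Finset.sort_nodup _ _), by
      rw [List.toFinset_eq_of_perm _ _ h, Finset.sort_toFinset]⟩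
  · rintro ⟨h1, h2⟩
    exact List.perm_of_nodup_nodup_toFinset_eq h1 (Finset.sort_nodup _ _)
      (by rw [h2, Finset.sort_toFinset])

noncomputable def cnt (V : Finset ℕ) : ℕ := ((perms V).filter (fun l => good l = true)).card

lemma takeWhile_append_cons (pred : ℕ → Bool) (p t : List ℕ) (a : ℕ)
    (hp : ∀ x ∈ p, pred x = true) (ha : pred a = false) :
    (p ++ a :: t).takeWhile pred = p ∧ (p ++ a :: t).dropWhile pred = a :: t := by
  induction p with
  | nil => simp [List.takeWhile_cons, List.dropWhile_cons, ha]
  | cons x p' ih =>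
    have hx : pred x = true := hp x List.mem_cons_self
    have := ih (fun z hz => hp z (List.mem_cons_of_mem _ hz))
    simp [List.takeWhile_cons, List.dropWhile_cons, hx, this.1, this.2]

lemma exists_decomp {m : ℕ} {l : List ℕ} (hm : m ∈ l) :
    l = l.takeWhile (fun x => decide (x ≠ m)) ++ m :: (l.dropWhile (fun x => decide (x ≠ m))).tail := by
  induction l with
  | nil => simp at hm
  | cons a l' ih =>
    by_cases h : a = m
    · subst h
      simp [List.takeWhile_cons, List.dropWhile_cons]
    · have hm' : m ∈ l' := by
        rcases List.mem_cons.mp hm with h' | h'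
        · exact absurd h'.symm h
        · exact h'
      have hd : (fun x => decide (x ≠ m)) a = true := by simpa using h
      conv_lhs => rw [ih hm']
      simp [List.takeWhile_cons, List.dropWhile_cons, h]

lemma cnt_rec (V : Finset ℕ) (hV : V.Nonempty) :
    cnt V = ∑ S ∈ (V.erase (V.min' hV)).powerset, cnt ((V.erase (V.min' hV)) \ S) := by
  classical
  set m := V.min' hV with hm
  set V' := V.erase m with hV'
  have hmV : m ∈ V := V.min'_mem hV
  have hlt : ∀ x ∈ V, x ≠ m → m < x := fun x hx hne =>
    lt_of_le_of_ne (V.min'_le x hx) (Ne.symm hne)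
  have key_mem : ∀ l ∈ (perms V).filter (fun l => good l = true),
      (l.takeWhile (fun x => decide (x ≠ m))).toFinset ∈ V'.powerset := by
    intro l hl
    rw [Finset.mem_filter, mem_perms] at hl
    rw [Finset.mem_powerset]
    intro x hx
    rw [List.mem_toFinset] at hx
    have h1 : x ∈ l := (List.takeWhile_prefix _).subset hx
    have h2 : x ≠ m := by simpa using List.mem_takeWhile_imp hx
    exact Finset.mem_erase.mpr ⟨h2, hl.1.2 ▸ List.mem_toFinset.mpr h1⟩
  rw [cnt, Finset.card_eq_sum_card_fiberwise key_mem]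
  refine Finset.sum_congr rfl fun S hS => ?_
  rw [Finset.mem_powerset] at hS
  have hmS : m ∉ S := fun h => (Finset.mem_erase.mp (hS h)).1 rfl
  have hSV : ∀ x ∈ S, m < x := fun x hx =>
    hlt x (Finset.mem_of_mem_erase (hS hx)) (Finset.mem_erase.mp (hS hx)).1
  rw [cnt]
  refine Finset.card_bij' (fun l _ => (l.dropWhile (fun x => decide (x ≠ m))).tail)
    (fun t _ => (S.sort (· ≥ ·)) ++ m :: t) ?_ ?_ ?_ ?_
  · -- forward membership
    intro l hl
    rw [Finset.mem_filter, Finset.mem_filter, mem_perms] at hl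
    obtain ⟨⟨⟨hnd, htf⟩, hg⟩, hkey⟩ := hl
    have hml : m ∈ l := by rw [← List.mem_toFinset, htf]; exact hmV
    have hdec := exists_decomp hml
    set p := l.takeWhile (fun x => decide (x ≠ m)) with hp
    set t := (l.dropWhile (fun x => decide (x ≠ m))).tail with ht
    have hndpt : (p ++ m :: t).Nodup := hdec ▸ hnd
    have hpm : ∀ x ∈ p, m < x := by
      intro x hx
      have h1 : x ∈ l := (List.takeWhile_prefix _).subset hx
      have h2 : x ≠ m := by simpa using List.mem_takeWhile_imp hx
      exact hlt x (by rw [← htf]; exact List.mem_toFinset.mpr h1) h2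
    have htm : ∀ x ∈ t, m ≤ x := by
      intro x hx
      have h1 : x ∈ l := by rw [hdec]; simp [hx]
      exact V.min'_le x (by rw [← htf]; exact List.mem_toFinset.mpr h1)
    have hgood : List.Chain' (· ≥ ·) p ∧ good t = true := by
      rw [← good_append p t m hpm htm, ← hdec]; exact hg
    rw [Finset.mem_filter, mem_perms]
    have hndt : t.Nodup := ((List.nodup_append'.mp hndpt).2.1).of_cons
    refine ⟨⟨hndt, ?_⟩, hgood.2⟩
    · ext x
      simp only [List.mem_toFinset, Finset.mem_sdiff, hV', Finset.mem_erase]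
      constructor
      · intro hx
        have hxl : x ∈ l := by rw [hdec]; simp [hx]
        have hxm : x ≠ m := by
          intro h; subst h
          exact ((List.nodup_append'.mp hndpt).2.1).notMem (by exact hx) |>.elim
        refine ⟨⟨hxm, by rw [← htf]; exact List.mem_toFinset.mpr hxl⟩, ?_⟩
        intro hxS
        have hxp : x ∈ p := by rw [← hkey] at hxS; exact List.mem_toFinset.mp hxS
        exact (List.nodup_append'.mp hndpt).2.2 hxp (by simp [hx])
      · rintro ⟨⟨hxm, hxV⟩, hxS⟩
        have hxl : x ∈ l := by rw [← List.mem_toFinset, htf]; exact hxV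
        rw [hdec] at hxl
        rcases List.mem_append.mp hxl with h | h
        · exact absurd (by rw [← hkey]; exact List.mem_toFinset.mpr h) hxS
        · rcases List.mem_cons.mp h with h | h
          · exact absurd h hxm
          · exact h
  · -- backward membership
    intro t ht
    rw [Finset.mem_filter, mem_perms] at ht
    obtain ⟨⟨hndt, htf⟩, hg⟩ := ht
    have htV : ∀ x ∈ t, x ∈ V' \ S := fun x hx => htf ▸ List.mem_toFinset.mpr hx
    have hmt : m ∉ t := fun h => (Finset.mem_erase.mp (Finset.mem_sdiff.mp (htV m h)).1).1 rfl
    have htm : ∀ x ∈ t, m ≤ x := fun x hx =>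
      V.min'_le x (Finset.mem_of_mem_erase (Finset.mem_sdiff.mp (htV x hx)).1)
    have hsortS : ∀ x ∈ S.sort (· ≥ ·), x ∈ S := fun x hx => (Finset.mem_sort _).mp hx
    have hnd : ((S.sort (· ≥ ·)) ++ m :: t).Nodup := by
      rw [List.nodup_append']
      refine ⟨Finset.sort_nodup _ _, List.nodup_cons.mpr ⟨hmt, hndt⟩, ?_⟩
      intro x hx hy
      have hxS : x ∈ S := hsortS x hx
      rcases List.mem_cons.mp hy with h | h
      · exact hmS (h ▸ hxS)
      · exact (Finset.mem_sdiff.mp (htV x h)).2 hxS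
    have htfin : ((S.sort (· ≥ ·)) ++ m :: t).toFinset = V := by
      ext x
      simp only [List.toFinset_append, Finset.mem_union, List.toFinset_cons,
        Finset.mem_insert, List.mem_toFinset, Finset.mem_sort]
      constructor
      · rintro (h | h | h)
        · exact Finset.mem_of_mem_erase (hS h)
        · subst h; exact hmV
        · exact Finset.mem_of_mem_erase (Finset.mem_sdiff.mp (htV x h)).1
      · intro hx
        by_cases hxm : x = m
        · exact Or.inr (Or.inl hxm)
        · by_cases hxS : x ∈ S
          · exact Or.inl hxS
          · refine Or.inr (Or.inr ?_)
            rw [← List.mem_toFinset, htf]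
            exact Finset.mem_sdiff.mpr ⟨Finset.mem_erase.mpr ⟨hxm, hx⟩, hxS⟩
    have hgood : good ((S.sort (· ≥ ·)) ++ m :: t) = true := by
      rw [good_append _ _ _ (fun x hx => hSV x (hsortS x hx)) htm]
      exact ⟨List.isChain_iff_pairwise.mpr (Finset.pairwise_sort _ _), hg⟩
    have hkey : (((S.sort (· ≥ ·)) ++ m :: t).takeWhile (fun x => decide (x ≠ m))).toFinset = S := by
      rw [(takeWhile_append_cons _ _ t m (fun x hx => by
        have : x ≠ m := fun hc => hmS (hc ▸ hsortS x hx)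
        simpa using this) (by simp)).1]
      exact Finset.sort_toFinset _ _
    rw [Finset.mem_filter, Finset.mem_filter, mem_perms]
    exact ⟨⟨⟨hnd, htfin⟩, hgood⟩, hkey⟩
  · -- left inverse
    intro l hl
    rw [Finset.mem_filter, Finset.mem_filter, mem_perms] at hl
    obtain ⟨⟨⟨hnd, htf⟩, hg⟩, hkey⟩ := hl
    have hml : m ∈ l := by rw [← List.mem_toFinset, htf]; exact hmV
    have hdec := exists_decomp hml
    set p := l.takeWhile (fun x => decide (x ≠ m)) with hp
    have hpl : ∀ x ∈ p, x ∈ l := fun x hx => (List.takeWhile_prefix _).subset hx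
    have hpnd : p.Nodup := (List.takeWhile_prefix _).sublist.nodup hnd
    have hpsort : p = S.sort (· ≥ ·) := by
      have hchain : List.Chain' (· ≥ ·) p := by
        have hpm : ∀ x ∈ p, m < x := fun x hx =>
          hlt x (by rw [← htf]; exact List.mem_toFinset.mpr (hpl x hx))
            (by simpa using List.mem_takeWhile_imp hx)
        have htm : ∀ x ∈ (l.dropWhile (fun x => decide (x ≠ m))).tail, m ≤ x := by
          intro x hx
          have h1 : x ∈ l := by
            rw [hdec]; exact List.mem_append_right _ (List.mem_cons_of_mem _ hx)
          exact V.min'_le x (by rw [← htf]; exact List.mem_toFinset.mpr h1)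
        exact ((good_append _ _ _ hpm htm).mp (hdec ▸ hg)).1
      refine List.Perm.eq_of_pairwise' (List.isChain_iff_pairwise.mp hchain) (Finset.pairwise_sort _ _) ?_
      exact List.perm_of_nodup_nodup_toFinset_eq hpnd (Finset.sort_nodup _ _)
        (by rw [hkey, Finset.sort_toFinset])
    conv_rhs => rw [hdec]
    rw [hpsort]
  · -- right inverse
    intro t ht
    show (((S.sort (· ≥ ·)) ++ m :: t).dropWhile (fun x => decide (x ≠ m))).tail = t
    rw [(takeWhile_append_cons (fun x => decide (x ≠ m)) (S.sort (· ≥ ·)) t m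
      (fun x hx => by
        have : x ≠ m := fun hc => hmS (hc ▸ (Finset.mem_sort _).mp hx)
        simpa using this) (by simp)).2]
    rfl

/-- The Bell numbers, via the standard recurrence
`B_0 = 1`, `B_{n+1} = ∑_{k=0}^{n} (n choose k) B_k`;
`B_n` counts set partitions of an `n`-element set. -/
def bell : ℕ → ℕ
  | 0 => 1
  | n + 1 => ∑ k ∈ (Finset.range (n + 1)).attach, n.choose k.1 * bell k.1
decreasing_by exact Finset.mem_range.mp k.2

lemma bell_succ (n : ℕ) : bell (n + 1) = ∑ k ∈ Finset.range (n + 1), n.choose k * bell k := by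
  rw [bell]
  exact Finset.sum_attach (Finset.range (n + 1)) (fun k => n.choose k * bell k)

lemma cnt_empty : cnt ∅ = 1 := by
  rw [cnt, perms]
  rw [Finset.sort_empty]
  rw [List.permutations_nil]
  simp [Finset.filter_singleton, good_nil]

lemma cnt_eq_bell : ∀ (n : ℕ) (V : Finset ℕ), V.card = n → cnt V = bell n := by
  intro n
  induction n using Nat.strong_induction_on with
  | _ n ih =>
    match n with
    | 0 =>
      intro V hVc
      rw [Finset.card_eq_zero.mp hVc, cnt_empty, bell]
    | n + 1 =>
      intro V hVc
      have hV : V.Nonempty := by rw [← Finset.card_pos, hVc]; omega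
      set m := V.min' hV
      set V' := V.erase m with hV'
      have hc : V'.card = n := by
        rw [hV', Finset.card_erase_of_mem (V.min'_mem hV), hVc]
        omega
      rw [cnt_rec V hV]
      have step : ∀ S ∈ V'.powerset, cnt (V' \ S) = bell (n - S.card) := by
        intro S hS
        rw [Finset.mem_powerset] at hS
        have hcard : (V' \ S).card = n - S.card := by rw [Finset.card_sdiff_of_subset hS, hc]
        exact ih (n - S.card) (by omega) _ hcard
      rw [Finset.sum_congr rfl step]
      rw [Finset.powerset_card_disjiUnion]
      refine (Finset.sum_disjiUnion _ _ _).trans ?_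
      have h2 : ∀ k ∈ Finset.range (V'.card + 1),
          ∑ S ∈ Finset.powersetCard k V', bell (n - S.card) = n.choose k * bell (n - k) := by
        intro k hk
        rw [Finset.sum_congr rfl (fun S hS => by rw [(Finset.mem_powersetCard.mp hS).2]),
          Finset.sum_const, Finset.card_powersetCard, hc, smul_eq_mul]
      rw [Finset.sum_congr rfl h2, hc]
      rw [bell_succ, ← Finset.sum_range_reflect (fun k => n.choose k * bell k) (n + 1)]
      refine Finset.sum_congr rfl fun k hk => ?_
      rw [Finset.mem_range] at hk
      have h3 : n + 1 - 1 - k = n - k := by omega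
      rw [h3, Nat.choose_symm (by omega : k ≤ n)]

lemma good_ofFn_iff (n : ℕ) (σ : Equiv.Perm (Fin n)) :
    good (List.ofFn (fun i => (σ i : ℕ))) = true ↔
      ∀ i j : Fin n, (i : ℕ) + 1 < (j : ℕ) →
        ∀ h : (i : ℕ) + 1 < n,
          ¬(σ j < σ i ∧ σ i < σ ⟨(i : ℕ) + 1, h⟩) := by
  rw [good_iff]
  constructor
  · intro H i j hij h
    have hj : (j : ℕ) < (List.ofFn (fun i => (σ i : ℕ))).length := by
      simpa using j.isLt
    have := H i j hij hj
    simp only [List.getElem_ofFn] at this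
    exact this
  · intro H i j hij hj
    have hjn : j < n := by simpa using hj
    have h1 : (i : ℕ) + 1 < n := by omega
    have := H ⟨i, by omega⟩ ⟨j, hjn⟩ (by simpa) h1
    simp only [List.getElem_ofFn]
    exact this

/-- The number of permutations of `{1,…,n}` avoiding the vincular pattern `23-1`
equals the `n`th Bell number. -/
theorem card_avoid231_perms_eq_bell (n : ℕ) :
    Nat.card {σ : Equiv.Perm (Fin n) //
      ∀ i j : Fin n, (i : ℕ) + 1 < (j : ℕ) →
        ∀ h : (i : ℕ) + 1 < n,
          ¬(σ j < σ i ∧ σ i < σ ⟨(i : ℕ) + 1, h⟩)} = bell n := by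
  classical
  rw [Nat.card_eq_fintype_card, Fintype.card_subtype]
  rw [← cnt_eq_bell n (Finset.range n) (Finset.card_range n), cnt]
  refine Finset.card_bij (fun σ _ => List.ofFn (fun i => (σ i : ℕ))) ?_ ?_ ?_
  · intro σ hσ
    rw [Finset.mem_filter] at hσ
    refine Finset.mem_filter.mpr ⟨mem_perms.mpr ⟨?_, ?_⟩, (good_ofFn_iff n σ).mpr hσ.2⟩
    · exact List.nodup_ofFn.mpr (Fin.val_injective.comp σ.injective)
    · ext x
      simp only [List.mem_toFinset, List.mem_ofFn, Set.mem_range, Finset.mem_range]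
      constructor
      · rintro ⟨i, rfl⟩; exact (σ i).isLt
      · intro hx; exact ⟨σ.symm ⟨x, hx⟩, by simp⟩
  · intro σ₁ h₁ σ₂ h₂ heq
    have := List.ofFn_injective heq
    ext i
    exact congrFun this i ▸ rfl
  · intro b hb
    rw [Finset.mem_filter, mem_perms] at hb
    obtain ⟨⟨hnd, htf⟩, hg⟩ := hb
    have hlen : b.length = n := by
      rw [← List.toFinset_card_of_nodup hnd, htf, Finset.card_range]
    have hbound : ∀ (i : ℕ) (h : i < b.length), b[i] < n := fun i h =>
      Finset.mem_range.mp (htf ▸ List.mem_toFinset.mpr (List.getElem_mem h))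
    set f : Fin n → Fin n := fun i => ⟨b[(i : ℕ)]'(hlen ▸ i.isLt), hbound _ _⟩ with hf
    have hinj : Function.Injective f := by
      intro a a' haa
      have h2 := List.nodup_iff_injective_getElem.mp hnd
      have : (⟨(a : ℕ), hlen ▸ a.isLt⟩ : Fin b.length) = ⟨(a' : ℕ), hlen ▸ a'.isLt⟩ :=
        h2 (by simpa [hf, Fin.ext_iff] using haa)
      exact Fin.ext (by simpa [Fin.ext_iff] using this)
    have hbij : Function.Bijective f := Finite.injective_iff_bijective.mp hinj
    have hofn : List.ofFn (fun i => ((Equiv.ofBijective f hbij) i : ℕ)) = b := by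
      apply List.ext_getElem (by simp [hlen])
      intro i h1 h2
      simp [List.getElem_ofFn, Equiv.ofBijective, hf]
    refine ⟨Equiv.ofBijective f hbij, Finset.mem_filter.mpr ⟨Finset.mem_univ _, ?_⟩, hofn⟩
    exact (good_ofFn_iff n _).mp (by rw [hofn]; exact hg)
end

section
/- Let w be a word of content k avoiding 2-1-2 and 23-2̄-1, where k has m zeros, and let i_1 < ... < i_l be the positions of the entries strictly smaller than everything to their right. Then for each j, the number of positions p < i_j with w_p ≤ w_{p+1} is at most m + j - 1. -/
/-- `w` avoids the pattern `2-1-2`. -/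
def avoids212 (w : List ℕ) : Prop :=
  ∀ i j l, i < j → j < l → l < w.length →
    ¬(w.getD j 0 < w.getD i 0 ∧ w.getD i 0 = w.getD l 0)

/-- `w` avoids the barred-vincular pattern `23-2̄-1`. -/
def avoids23bar21 (w : List ℕ) : Prop :=
  ∀ i j, i + 1 < j → j < w.length →
    w.getD j 0 < w.getD i 0 → w.getD i 0 < w.getD (i + 1) 0 →
      ∃ k, i + 1 < k ∧ k < j ∧ w.getD k 0 = w.getD i 0

private lemma aux_indexOf_le : ∀ (l : List ℕ) (i : ℕ) (h : i < l.length),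
    l.idxOf (l[i]) ≤ i := by
  intro l
  induction l with
  | nil => intro i h; simp at h
  | cons b t ih =>
    intro i h
    cases i with
    | zero => simp
    | succ i =>
      have hi : i < t.length := by simpa using Nat.lt_of_succ_lt_succ h
      rw [List.getElem_cons_succ]
      by_cases hb : b = t[i]'hi
      · rw [List.idxOf_cons_eq _ hb]; omega
      · rw [List.idxOf_cons_ne _ hb]
        have := ih i hi
        omega

/-- the set of later repeated occurrences of the value at `q`. -/
private def auxC (w : List ℕ) (n q : ℕ) : Finset ℕ :=
  (Finset.range n).filter (fun t => q + 1 < t ∧ w.getD t 0 = w.getD q 0)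

private lemma mem_auxC {w : List ℕ} {n q t : ℕ} :
    t ∈ auxC w n q ↔ t < n ∧ (q + 1 < t ∧ w.getD t 0 = w.getD q 0) := by
  simp [auxC, Finset.mem_filter, Finset.mem_range]

private def auxf (w : List ℕ) (n q : ℕ) : ℕ ⊕ ℕ :=
  if w.getD q 0 = w.getD (q + 1) 0 then Sum.inl (q + 1)
  else if hq : (auxC w n q).Nonempty then Sum.inl ((auxC w n q).min' hq)
  else Sum.inr q

/-- Let `w` be a word of content `k` (a composition of `n` with `m` zeros) avoiding
`2-1-2` and `23-2̄-1`, and let `S` be the set of positions of `w` whose entry is strictly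
smaller than all entries strictly to its right (so `i_1 < … < i_l` lists `S`).  Then for
each `p = i_j ∈ S`, the number of nondescent positions `q < p` (i.e. `w_q ≤ w_{q+1}`) is
at most `m + j - 1`, where `j - 1 = #{s ∈ S : s < p}`. -/
theorem nondescents_before_minimum_le (n : ℕ) (k w : List ℕ)
    (hklen : k.length = n) (hksum : k.sum = n)
    (hwlen : w.length = n)
    (hmem : ∀ x ∈ w, 1 ≤ x ∧ x ≤ n)
    (hcont : ∀ j, 1 ≤ j → j ≤ n → w.count j = k.getD (j - 1) 0)
    (h212 : avoids212 w) (h23b : avoids23bar21 w) :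
    ∀ p ∈ (Finset.range n).filter
        (fun p => ∀ q ∈ Finset.range n, p < q → w.getD p 0 < w.getD q 0),
      ((Finset.range p).filter (fun q => w.getD q 0 ≤ w.getD (q + 1) 0)).card
        ≤ ((Finset.range n).filter (fun j => k.getD j 0 = 0)).card
          + (((Finset.range n).filter
              (fun r => ∀ q ∈ Finset.range n, r < q → w.getD r 0 < w.getD q 0)).filter
              (fun s => s < p)).card := by
  intro p hp
  have hpn : p < n := Finset.mem_range.mp (Finset.mem_filter.mp hp).1
  classical
  set A := (Finset.range p).filter (fun q => w.getD q 0 ≤ w.getD (q + 1) 0) with hA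
  set Z := (Finset.range n).filter (fun j => k.getD j 0 = 0) with hZ
  set SS := (Finset.range n).filter
      (fun r => ∀ q ∈ Finset.range n, r < q → w.getD r 0 < w.getD q 0) with hSS
  set Sp := SS.filter (fun s => s < p) with hSp
  set R := (Finset.range n).filter
      (fun t => ∃ t' < t, w.getD t' 0 = w.getD t 0) with hR
  -- main structural claim: a strict ascent with no later equal occurrence is in `S`
  have hS : ∀ q, q < n → w.getD q 0 < w.getD (q + 1) 0 → ¬(auxC w n q).Nonempty →
      ∀ r ∈ Finset.range n, q < r → w.getD q 0 < w.getD r 0 := by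
    intro q hqn hasc hC r hr hqr
    have hrn : r < n := Finset.mem_range.mp hr
    by_contra hc
    push_neg at hc
    rcases eq_or_lt_of_le hc with heq | hlt
    · have hne : r ≠ q + 1 := by
        intro h; rw [h] at heq; omega
      have : r ∈ auxC w n q := mem_auxC.mpr ⟨hrn, by omega, heq⟩
      exact hC ⟨r, this⟩
    · have hne : r ≠ q + 1 := by
        intro h; rw [h] at hlt; omega
      obtain ⟨t, ht1, ht2, ht3⟩ := h23b q r (by omega) (by omega) hlt hasc
      have : t ∈ auxC w n q := mem_auxC.mpr ⟨by omega, ht1, ht3⟩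
      exact hC ⟨t, this⟩
  -- injectivity key
  have key : ∀ q q', q < q' → q' < n → w.getD q 0 ≤ w.getD (q + 1) 0 →
      auxf w n q ≠ auxf w n q' := by
    intro q q' hlt hq'n hasc heq
    unfold auxf at heq
    by_cases h1 : w.getD q 0 = w.getD (q + 1) 0
    · rw [if_pos h1] at heq
      by_cases h1' : w.getD q' 0 = w.getD (q' + 1) 0
      · rw [if_pos h1'] at heq
        simp only [Sum.inl.injEq] at heq; omega
      · rw [if_neg h1'] at heq
        by_cases h2' : (auxC w n q').Nonempty
        · rw [dif_pos h2'] at heq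
          simp only [Sum.inl.injEq] at heq
          have := mem_auxC.mp (Finset.min'_mem _ h2')
          omega
        · rw [dif_neg h2'] at heq; simp at heq
    · rw [if_neg h1] at heq
      have hstrict : w.getD q 0 < w.getD (q + 1) 0 := lt_of_le_of_ne hasc h1
      by_cases h2 : (auxC w n q).Nonempty
      · rw [dif_pos h2] at heq
        obtain ⟨htn, hqt, hvt⟩ := mem_auxC.mp (Finset.min'_mem _ h2)
        by_cases h1' : w.getD q' 0 = w.getD (q' + 1) 0
        · rw [if_pos h1'] at heq
          simp only [Sum.inl.injEq] at heq
          -- min' (C q) = q' + 1, value at q' equals value at q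
          have hvq' : w.getD q' 0 = w.getD q 0 := by
            rw [h1', ← heq, hvt]
          rcases Nat.lt_or_ge (q + 1) q' with hq1 | hq1
          · have hm : q' ∈ auxC w n q := by
              simp only [auxC, Finset.mem_filter, Finset.mem_range]
              exact ⟨hq'n, hq1, hvq'⟩
            have := Finset.min'_le _ _ hm
            omega
          · have : q' = q + 1 := by omega
            rw [this] at hvq'; omega
        · rw [if_neg h1'] at heq
          by_cases h2' : (auxC w n q').Nonempty
          · rw [dif_pos h2'] at heq
            simp only [Sum.inl.injEq] at heq
            obtain ⟨-, hqt', hvt'⟩ := mem_auxC.mp (Finset.min'_mem _ h2')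
            rw [← heq] at hqt' hvt'
            have hvq' : w.getD q' 0 = w.getD q 0 := by rw [← hvt', hvt]
            rcases Nat.lt_or_ge (q + 1) q' with hq1 | hq1
            · have hm : q' ∈ auxC w n q := by
                simp only [auxC, Finset.mem_filter, Finset.mem_range]
                exact ⟨hq'n, hq1, hvq'⟩
              have := Finset.min'_le _ _ hm
              omega
            · have : q' = q + 1 := by omega
              rw [this] at hvq'; omega
          · rw [dif_neg h2'] at heq; simp at heq
      · rw [dif_neg h2] at heq
        by_cases h1' : w.getD q' 0 = w.getD (q' + 1) 0
        · rw [if_pos h1'] at heq; simp at heq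
        · rw [if_neg h1'] at heq
          by_cases h2' : (auxC w n q').Nonempty
          · rw [dif_pos h2'] at heq; simp at heq
          · rw [dif_neg h2'] at heq
            simp only [Sum.inr.injEq] at heq; omega
  -- maps to
  have hmaps : ∀ q ∈ A, auxf w n q ∈ R.disjSum Sp := by
    intro q hqA
    rw [hA, Finset.mem_filter, Finset.mem_range] at hqA
    obtain ⟨hqp, hasc⟩ := hqA
    have hqn : q < n := by omega
    unfold auxf
    by_cases h1 : w.getD q 0 = w.getD (q + 1) 0
    · rw [if_pos h1]
      apply Finset.inl_mem_disjSum.mpr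
      rw [hR, Finset.mem_filter, Finset.mem_range]
      exact ⟨by omega, q, by omega, h1⟩
    · rw [if_neg h1]
      by_cases h2 : (auxC w n q).Nonempty
      · rw [dif_pos h2]
        apply Finset.inl_mem_disjSum.mpr
        obtain ⟨htn, hqt, hvt⟩ := mem_auxC.mp (Finset.min'_mem _ h2)
        rw [hR, Finset.mem_filter, Finset.mem_range]
        exact ⟨htn, q, by omega, hvt.symm⟩
      · rw [dif_neg h2]
        apply Finset.inr_mem_disjSum.mpr
        rw [hSp, Finset.mem_filter, hSS, Finset.mem_filter, Finset.mem_range]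
        exact ⟨⟨hqn, hS q hqn (lt_of_le_of_ne hasc h1) h2⟩, hqp⟩
  have hinj : Set.InjOn (auxf w n) A := by
    intro q hq q' hq' heq
    by_contra hne
    rw [hA, Finset.coe_filter] at hq hq'
    simp only [Set.mem_setOf_eq, Finset.mem_range] at hq hq'
    rcases Nat.lt_or_ge q q' with h | h
    · exact key q q' h (by omega) hq.2 heq
    · have : q' < q := by omega
      exact key q' q this (by omega) hq'.2 heq.symm
  have hcard1 : A.card ≤ R.card + Sp.card := by
    have := Finset.card_le_card_of_injOn (auxf w n) hmaps hinj
    rwa [Finset.card_disjSum] at this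
  -- now show R.card ≤ Z.card
  have hRF : R.card + ((Finset.range n).filter
      (fun t => ¬∃ t' < t, w.getD t' 0 = w.getD t 0)).card = n := by
    rw [hR, Finset.card_filter_add_card_filter_not, Finset.card_range]
  have hZNZ : Z.card + ((Finset.range n).filter
      (fun j => ¬ k.getD j 0 = 0)).card = n := by
    rw [hZ, Finset.card_filter_add_card_filter_not, Finset.card_range]
  have hidxval : ∀ j ∈ (Finset.range n).filter (fun j => ¬ k.getD j 0 = 0),
      w.idxOf (j + 1) < w.length ∧ w.getD (w.idxOf (j + 1)) 0 = j + 1 := by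
    intro j hj
    rw [Finset.mem_filter, Finset.mem_range] at hj
    obtain ⟨hjn, hkj⟩ := hj
    have hcnt : w.count (j + 1) = k.getD j 0 := by
      have := hcont (j + 1) (by omega) (by omega)
      simpa using this
    have hmem' : (j + 1) ∈ w := by
      rw [← List.count_pos_iff]
      omega
    have hidx : w.idxOf (j + 1) < w.length := List.idxOf_lt_length_iff.mpr hmem'
    refine ⟨hidx, ?_⟩
    rw [List.getD_eq_getElem _ _ hidx]
    exact List.getElem_idxOf hidx
  have hNF : ((Finset.range n).filter (fun j => ¬ k.getD j 0 = 0)).card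
      ≤ ((Finset.range n).filter
        (fun t => ¬∃ t' < t, w.getD t' 0 = w.getD t 0)).card := by
    apply Finset.card_le_card_of_injOn (fun j => w.idxOf (j + 1))
    · intro j hj
      obtain ⟨hidx, hval⟩ := hidxval j hj
      rw [Finset.mem_coe, Finset.mem_filter, Finset.mem_range]
      beta_reduce
      refine ⟨by omega, ?_⟩
      rintro ⟨t', ht', heq⟩
      rw [hval] at heq
      have ht'l : t' < w.length := by omega
      rw [List.getD_eq_getElem _ _ ht'l] at heq
      have := aux_indexOf_le w t' ht'l
      rw [heq] at this
      omega
    · intro j hj j' hj' heq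
      simp only at heq
      have h1 := (hidxval j hj).2
      have h2 := (hidxval j' hj').2
      rw [heq] at h1
      rw [h2] at h1
      omega
  omega
end

section
/- Let k be a reverse-Catalan composition of n and w a word of content k. If TotalRep_w(i) + ℓ_w(i) < z(i) for some letter i appearing in w, then there exists a letter j appearing in w such that TotalRep_w(j) + ℓ_w(j) < z(j) and no entry of w to the right of the rightmost occurrence of j is smaller than j. -/
/-- The part of `w` strictly to the right of the rightmost occurrence of the letter `i`
(all of `w` if `i` does not occur). -/
def afterLast (w : List ℕ) (i : ℕ) : List ℕ := (w.reverse.takeWhile (· != i)).reverse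

/-- `TotalRep w i = ∑_{j ≠ i} max(k(i,j) - 1, 0)`, where `k(i,j)` is the number of
occurrences of `j` strictly right of the rightmost occurrence of `i`. -/
def TotalRep (w : List ℕ) (i : ℕ) : ℕ :=
  ∑ j ∈ (afterLast w i).toFinset.filter (· ≠ i), ((afterLast w i).count j - 1)

/-- `BigRep w i = ∑_{j > i} max(k(i,j) - 1, 0)`. -/
def BigRep (w : List ℕ) (i : ℕ) : ℕ :=
  ∑ j ∈ (afterLast w i).toFinset.filter (fun j => i < j), ((afterLast w i).count j - 1)

/-- The length of the rightmost maximal block of consecutive `i`s in `w`. -/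
def ellw (w : List ℕ) (i : ℕ) : ℕ :=
  ((w.reverse.dropWhile (· != i)).takeWhile (· == i)).length

/-- `zfun k i` is the number of (1-indexed) positions `j > i` with `k_j = 0`. -/
def zfun (k : List ℕ) (i : ℕ) : ℕ :=
  ((Finset.range k.length).filter (fun j => i ≤ j ∧ k.getD j 0 = 0)).card

lemma sum_count_eq_length (l : List ℕ) : ∑ a ∈ l.toFinset, l.count a = l.length := by
  simpa using Multiset.toFinset_sum_count_eq (l : Multiset ℕ)

lemma not_mem_afterLast (w : List ℕ) (i : ℕ) : i ∉ afterLast w i := by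
  intro h
  have h' : i ∈ w.reverse.takeWhile (· != i) := by
    simpa [afterLast] using h
  simpa using List.mem_takeWhile_imp h'

lemma totalRep_eq (w : List ℕ) (i : ℕ) :
    TotalRep w i = (afterLast w i).length - (afterLast w i).toFinset.card := by
  unfold TotalRep
  rw [Finset.filter_true_of_mem (by
    intro j hj hji
    rw [hji] at hj
    exact (not_mem_afterLast w i) (List.mem_toFinset.mp hj))]
  rw [Finset.sum_tsub_distrib _ (fun j hj =>
    (List.count_pos_iff).mpr (List.mem_toFinset.mp hj))]
  rw [sum_count_eq_length, Finset.sum_const, smul_eq_mul]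
  omega

lemma zfun_anti (k : List ℕ) {x i : ℕ} (h : x ≤ i) : zfun k i ≤ zfun k x := by
  apply Finset.card_le_card
  intro j hj
  simp only [Finset.mem_filter, Finset.mem_range] at *
  exact ⟨hj.1, le_trans h hj.2.1, hj.2.2⟩

lemma ellw_pos (w : List ℕ) (i : ℕ) (hi : i ∈ w) : 1 ≤ ellw w i := by
  set r := w.reverse with hr
  have hD : r.dropWhile (· != i) ≠ [] := by
    intro hnil
    have := (List.dropWhile_eq_nil_iff).mp hnil i (by simpa [hr] using hi)
    simp at this
  have hhead : (r.dropWhile (· != i)).head hD = i := by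
    have := List.head_dropWhile_not (· != i) (l := r) hD
    simpa using this
  unfold ellw
  rw [← hr, ← List.cons_head_tail hD, hhead]
  rw [List.takeWhile_cons_of_pos (by simp)]
  simp

/-- Key step: if `x ≠ i` occurs after the last `i`, then `x`'s statistics are controlled. -/
lemma key_step (w : List ℕ) (i x : ℕ) (hi : i ∈ w) (hx : x ∈ afterLast w i) (hxi : x ≠ i) :
    x ∈ w ∧ TotalRep w x + ellw w x ≤ TotalRep w i + 1 ∧
      (afterLast w x).length < (afterLast w i).length := by
  classical
  set r := w.reverse with hr
  set A := r.takeWhile (· != i) with hA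
  set D := r.dropWhile (· != i) with hD
  have hAD : A ++ D = r := List.takeWhile_append_dropWhile
  have hxA : x ∈ A := by simpa [afterLast, ← hr, ← hA] using hx
  -- x ∈ w
  have hxw : x ∈ w := by
    have : x ∈ r := (List.takeWhile_sublist _).mem hxA
    simpa [hr] using this
  -- D nonempty with head i
  have hDne : D ≠ [] := by
    intro hnil
    have := (List.dropWhile_eq_nil_iff).mp hnil i (by simpa [hr] using hi)
    simp at this
  have hDhead : D.head hDne = i := by
    have := List.head_dropWhile_not (· != i) (l := r) hDne
    simpa using this
  -- T and D2 : split of A at the first x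
  set T := A.takeWhile (· != x) with hT
  set D2 := A.dropWhile (· != x) with hD2
  have hTD2 : T ++ D2 = A := List.takeWhile_append_dropWhile
  have hD2ne : D2 ≠ [] := by
    intro hnil
    have := (List.dropWhile_eq_nil_iff).mp hnil x hxA
    simp at this
  have hD2head : D2.head hD2ne = x := by
    have := List.head_dropWhile_not (· != x) (l := A) hD2ne
    simpa using this
  have hTlt : T.length < A.length := by
    have hpre : T <+: A := List.takeWhile_prefix _
    have hle := hpre.length_le
    rcases lt_or_eq_of_le hle with h | h
    · exact h
    · exfalso
      have : T = A := hpre.eq_of_length h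
      have hxT : x ∈ T := this ▸ hxA
      have := List.mem_takeWhile_imp hxT
      simp at this
  -- afterLast w x = T.reverse
  have hAfter : afterLast w x = T.reverse := by
    unfold afterLast
    have hne : ¬((A.takeWhile (· != x)).length = A.length) := by rw [← hT]; omega
    rw [← hr, ← hAD, List.takeWhile_append, if_neg hne, ← hT]
  -- ellw w x computation
  have hdropr : r.dropWhile (· != x) = D2 ++ D := by
    rw [← hAD, List.dropWhile_append, if_neg (by simp [List.isEmpty_iff, ← hD2, hD2ne]), hD2]
  have hellx : ellw w x = ((D2 ++ D).takeWhile (· == x)).length := by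
    unfold ellw
    rw [← hr, hdropr]
  -- takeWhile (==x) D = []
  have htwD : D.takeWhile (· == x) = [] := by
    rw [← List.cons_head_tail hDne, hDhead]
    exact List.takeWhile_cons_of_neg (by simp [Ne.symm hxi])
  -- bound: ellw w x + D2.toFinset.card ≤ D2.length + 1
  have hbound : ellw w x + D2.toFinset.card ≤ D2.length + 1 := by
    rw [hellx, List.takeWhile_append]
    by_cases hcase : (D2.takeWhile (· == x)).length = D2.length
    · rw [if_pos hcase, List.length_append, htwD, List.length_nil]
      -- D2 is all x's, so toFinset ⊆ {x}
      have hall : D2.toFinset ⊆ {x} := by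
        intro a ha
        have haD2 : a ∈ D2 := List.mem_toFinset.mp ha
        have : D2.takeWhile (· == x) = D2 :=
          (List.takeWhile_prefix _).eq_of_length hcase
        have haT : a ∈ D2.takeWhile (· == x) := by rw [this]; exact haD2
        have := List.mem_takeWhile_imp haT
        simp at this
        simp [this]
      have := Finset.card_le_card hall
      simp only [Finset.card_singleton] at this
      omega
    · rw [if_neg hcase]
      have h1 : (D2.takeWhile (· == x)).length + (D2.dropWhile (· == x)).length = D2.length := by
        rw [← List.length_append, List.takeWhile_append_dropWhile]
      have h2 : D2.toFinset.card ≤ (D2.takeWhile (· == x)).toFinset.card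
          + (D2.dropWhile (· == x)).toFinset.card := by
        calc D2.toFinset.card
            = ((D2.takeWhile (· == x)) ++ (D2.dropWhile (· == x))).toFinset.card := by
              rw [List.takeWhile_append_dropWhile]
          _ ≤ _ := by rw [List.toFinset_append]; exact Finset.card_union_le _ _
      have h3 : (D2.takeWhile (· == x)).toFinset ⊆ {x} := by
        intro a ha
        have := List.mem_takeWhile_imp (List.mem_toFinset.mp ha)
        simp at this
        simp [this]
      have h3' := Finset.card_le_card h3
      simp only [Finset.card_singleton] at h3'
      have h4 := List.toFinset_card_le (D2.dropWhile (· == x))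
      omega
  -- main counting
  have hTRx : TotalRep w x = T.length - T.toFinset.card := by
    rw [totalRep_eq, hAfter]
    simp
  have hTRi : TotalRep w i = A.length - A.toFinset.card := by
    rw [totalRep_eq]
    simp [afterLast, ← hr, ← hA]
  have hcA : A.toFinset.card ≤ T.toFinset.card + D2.toFinset.card := by
    calc A.toFinset.card = (T ++ D2).toFinset.card := by rw [hTD2]
      _ ≤ _ := by rw [List.toFinset_append]; exact Finset.card_union_le _ _
  have hlenA : T.length + D2.length = A.length := by
    rw [← List.length_append, hTD2]
  have hcT := List.toFinset_card_le T
  have hcAle := List.toFinset_card_le A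
  have hlen : (afterLast w x).length < (afterLast w i).length := by
    rw [hAfter]
    simp only [List.length_reverse]
    simpa [afterLast, ← hr, ← hA] using hTlt
  exact ⟨hxw, by omega, hlen⟩

lemma main_aux (k : List ℕ) : ∀ (N : ℕ) (w : List ℕ) (i : ℕ),
    (afterLast w i).length ≤ N → i ∈ w → TotalRep w i + ellw w i < zfun k i →
    ∃ j ∈ w, TotalRep w j + ellw w j < zfun k j ∧ ∀ x ∈ afterLast w j, ¬ x < j := by
  intro N
  induction N with
  | zero =>
    intro w i hlen hi hvio
    refine ⟨i, hi, hvio, ?_⟩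
    intro x hx
    have : (afterLast w i).length = 0 := Nat.le_zero.mp hlen
    rw [List.length_eq_zero_iff.mp this] at hx
    simp at hx
  | succ N ih =>
    intro w i hlen hi hvio
    by_cases hcase : ∃ x ∈ afterLast w i, x < i
    · obtain ⟨x, hx, hxlt⟩ := hcase
      obtain ⟨hxw, hkey, hdec⟩ := key_step w i x hi hx (by omega)
      have hellipos := ellw_pos w i hi
      have hz := zfun_anti k (le_of_lt hxlt)
      have hviox : TotalRep w x + ellw w x < zfun k x := by omega
      exact ih w x (by omega) hxw hviox
    · push_neg at hcase
      exact ⟨i, hi, hvio, fun x hx hlt => absurd (hcase x hx) (by omega)⟩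

/-- Let `k` be a reverse-Catalan composition of `n` and `w` a word of content `k`.
If `TotalRep_w(i) + ℓ_w(i) < z(i)` for some letter `i` of `w`, then there is a letter `j`
of `w` with `TotalRep_w(j) + ℓ_w(j) < z(j)` such that no entry of `w` strictly right of
the rightmost `j` is smaller than `j`. -/
theorem exists_rightmost_violating_letter_total (n : ℕ) (k w : List ℕ)
    (hklen : k.length = n) (hksum : k.sum = n)
    (hrc : ∀ i, 1 ≤ i → i ≤ n → i ≤ (k.drop (n - i)).sum)
    (hwlen : w.length = n)
    (hmem : ∀ x ∈ w, 1 ≤ x ∧ x ≤ n)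
    (hcont : ∀ j, 1 ≤ j → j ≤ n → w.count j = k.getD (j - 1) 0)
    (i : ℕ) (hi : i ∈ w) (h : TotalRep w i + ellw w i < zfun k i) :
    ∃ j ∈ w, TotalRep w j + ellw w j < zfun k j ∧
      ∀ x ∈ afterLast w j, ¬ x < j :=
  main_aux k (afterLast w i).length w i le_rfl hi h
end

section
/- Let k be a reverse-Catalan composition of n and w a word of content k. If BigRep_w(i) < z(i) for some letter i appearing in w, then there exists a letter j appearing in w such that BigRep_w(j) < z(j) and the subword of w to the right of the rightmost occurrence of j contains no entries smaller than j. -/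
private lemma takeWhile_append_cons_s13 {α} (q : α → Bool) (t s : List α) (j : α)
    (h1 : ∀ a ∈ t, q a) (h2 : ¬ q j) : (t ++ j :: s).takeWhile q = t := by
  induction t with
  | nil => simp [List.takeWhile_cons, h2]
  | cons a t ih =>
    have ha : q a := h1 a (by simp)
    simp only [List.cons_append, List.takeWhile_cons, ha]
    rw [ih (fun b hb => h1 b (by simp [hb]))]
    simp

private lemma zfun_mono (k : List ℕ) {i j : ℕ} (hji : j ≤ i) : zfun k i ≤ zfun k j := by
  apply Finset.card_le_card
  intro m hm
  simp only [Finset.mem_filter, Finset.mem_range] at hm ⊢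
  exact ⟨hm.1, le_trans hji hm.2.1, hm.2.2⟩

/-- Let `k` be a reverse-Catalan composition of `n` and `w` a word of content `k`.
If `BigRep_w(i) < z(i)` for some letter `i` of `w`, then there is a letter `j` of `w`
with `BigRep_w(j) < z(j)` such that the subword of `w` strictly right of the rightmost
occurrence of `j` contains no entries smaller than `j`. -/
theorem exists_rightmost_violating_letter_big (n : ℕ) (k w : List ℕ)
    (hklen : k.length = n) (hksum : k.sum = n)
    (hrc : ∀ i, 1 ≤ i → i ≤ n → i ≤ (k.drop (n - i)).sum)
    (hwlen : w.length = n)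
    (hmem : ∀ x ∈ w, 1 ≤ x ∧ x ≤ n)
    (hcont : ∀ j, 1 ≤ j → j ≤ n → w.count j = k.getD (j - 1) 0)
    (i : ℕ) (hi : i ∈ w) (h : BigRep w i < zfun k i) :
    ∃ j ∈ w, BigRep w j < zfun k j ∧ ∀ x ∈ afterLast w j, ¬ x < j := by
  by_cases hno : ∀ x ∈ afterLast w i, ¬ x < i
  · exact ⟨i, hi, h, hno⟩
  push_neg at hno
  obtain ⟨x, hxmem, hxlt⟩ := hno
  set r := w.reverse with hr
  set u := r.takeWhile (· != i) with hu
  have hxu : x ∈ u := by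
    have : x ∈ u.reverse := hxmem
    simpa using this
  -- every element of u is ≠ i
  have hune : ∀ a ∈ u, a ≠ i := by
    intro a ha
    have := List.mem_takeWhile_imp ha
    simpa using this
  set p : ℕ → Bool := fun a => decide (i ≤ a) with hp
  set t := u.takeWhile p with ht
  set d := u.dropWhile p with hd
  have hdne : d ≠ [] := by
    intro hnil
    have : ∀ y ∈ u, p y := List.dropWhile_eq_nil_iff.mp hnil
    have := this x hxu
    simp [hp] at this
    omega
  obtain ⟨j, d', hjd⟩ : ∃ j d', d = j :: d' := by
    cases hdc : d with
    | nil => exact absurd hdc hdne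
    | cons a l => exact ⟨a, l, rfl⟩
  have hju : j ∈ u := by
    have : j ∈ d := by simp [hjd]
    exact (List.dropWhile_suffix p).sublist.subset this
  have hjw : j ∈ w := by
    have : j ∈ r := (List.takeWhile_prefix _).sublist.subset hju
    simpa [hr] using this
  have hnpj : ¬ p j := by
    have hl : 0 < d.length := by simp [hjd]
    have := List.dropWhile_get_zero_not p u (by simpa [hd] using hl)
    simpa [← hd, hjd] using this
  have hji : j < i := by simp [hp] at hnpj; omega
  -- elements of t are > i
  have htgt : ∀ a ∈ t, i < a := by
    intro a ha
    have h1 : p a := List.mem_takeWhile_imp ha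
    have h2 : a ≠ i := hune a ((List.takeWhile_prefix _).sublist.subset ha)
    simp [hp] at h1
    omega
  -- u = t ++ j :: d'
  have hudecomp : u = t ++ j :: d' := by
    rw [← hjd, ht, hd, List.takeWhile_append_dropWhile]
  -- r = t ++ j :: (d' ++ r.dropWhile (· != i))
  have hrdecomp : r = t ++ j :: (d' ++ r.dropWhile (· != i)) := by
    conv_lhs => rw [← List.takeWhile_append_dropWhile (p := (· != i)) (l := r)]
    rw [← hu, hudecomp]
    simp
  -- afterLast w j = t.reverse
  have haj : afterLast w j = t.reverse := by
    unfold afterLast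
    rw [← hr]
    congr 1
    conv_lhs => rw [hrdecomp]
    apply takeWhile_append_cons_s13
    · intro a ha
      have := htgt a ha
      simp
      omega
    · simp
  -- afterLast w i = u.reverse
  have hai : afterLast w i = u.reverse := rfl
  refine ⟨j, hjw, ?_, ?_⟩
  · -- BigRep w j ≤ BigRep w i < zfun k i ≤ zfun k j
    have key : BigRep w j ≤ BigRep w i := by
      unfold BigRep
      rw [haj, hai]
      simp only [List.toFinset_reverse, List.count_reverse]
      calc ∑ m ∈ t.toFinset.filter (fun m => j < m), (t.count m - 1)
          ≤ ∑ m ∈ t.toFinset.filter (fun m => j < m), (u.count m - 1) := by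
            apply Finset.sum_le_sum
            intro m _
            have : t.count m ≤ u.count m :=
              (List.takeWhile_prefix _).sublist.count_le m
            omega
        _ ≤ ∑ m ∈ u.toFinset.filter (fun m => i < m), (u.count m - 1) := by
            apply Finset.sum_le_sum_of_subset
            intro m hm
            simp only [Finset.mem_filter, List.mem_toFinset] at hm ⊢
            refine ⟨(List.takeWhile_prefix _).sublist.subset hm.1, htgt m hm.1⟩
    calc BigRep w j ≤ BigRep w i := key
      _ < zfun k i := h
      _ ≤ zfun k j := zfun_mono k hji.le
  · intro y hy
    rw [haj] at hy
    have := htgt y (by simpa using hy)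
    omega
end

section
/- Let w be a word of content k avoiding 2-1-2. Define Tree(w) via: build a caterpillar with internal edges labeled left-to-right by w; call a leaf between edges labeled x (left) and y (right) a descent leaf if x > y; label each descent leaf by its left edge label; then label remaining leaves from left to right with the smallest unused label from {c,1,...,n} (ordered c < 1 < ... < n), skipping to the second smallest if the smallest equals the label of the edge immediately to the right. Then this procedure uses each label in {c,1,...,n} exactly once. -/
/-- Leaf `q` (for `0 ≤ q ≤ n`, where `n = |w|`; the leaves `a, b` are excluded) of the
caterpillar with internal edges labeled by `w` is a descent leaf: either it is the
distinguished right-end descent leaf `q = n - 1`, or it lies between edges labeled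
`w_q > w_{q+1}`.  The label `c` is encoded as `0`, so the label set is `{0,1,…,n}`. -/
def isDescentLeaf (w : List ℕ) (q : ℕ) : Bool :=
  decide (q < w.length) &&
    (decide (q = w.length - 1) || decide (w.getD (q + 1) 0 < w.getD q 0))

/-- The labels the descent leaves receive (each descent leaf gets its left edge label),
listed from left to right. -/
def descentLabels (w : List ℕ) : List ℕ :=
  ((List.range (w.length + 1)).filter (isDescentLeaf w)).map (fun q => w.getD q 0)

/-- The nondescent leaves, listed from left to right (the rightmost leaf `q = n` is a
nondescent leaf with no edge to its right). -/
def ndPositions (w : List ℕ) : List ℕ :=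
  (List.range (w.length + 1)).filter (fun q => !(isDescentLeaf w q))

/-- Pick the smallest natural number not in `used`, skipping to the second smallest if
the smallest equals the forbidden value `av`. -/
noncomputable def pick (used : Finset ℕ) (av : ℕ) : ℕ :=
  if sInf {m : ℕ | m ∉ used} = av then sInf {m : ℕ | m ∉ used ∧ m ≠ av}
  else sInf {m : ℕ | m ∉ used}

/-- Greedily assign labels to the nondescent leaves from left to right: each leaf `q`
receives the smallest unused label, unless that label equals the label `w_{q+1}` of the
edge immediately to its right, in which case it receives the second smallest unused
label.  (The rightmost leaf `q = n` has no right edge, so nothing is skipped there.) -/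
noncomputable def assignND (w : List ℕ) : List ℕ → Finset ℕ → List ℕ
  | [], _ => []
  | q :: rest, used =>
    let av := if q + 1 < w.length then w.getD (q + 1) 0 else w.length + 1
    let lab := pick used av
    lab :: assignND w rest (insert lab used)

/-- All the leaf labels of `Tree(w)` (other than `a`, `b`): the descent-leaf labels
together with the greedily assigned nondescent-leaf labels. -/
noncomputable def treeLeafLabels (w : List ℕ) : List ℕ :=
  descentLabels w ++ assignND w (ndPositions w) (descentLabels w).toFinset

/-! ### Auxiliary lemmas -/

lemma pick_not_mem (used : Finset ℕ) (av : ℕ) : pick used av ∉ used := by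
  unfold pick
  split
  · have hne : {m : ℕ | m ∉ used ∧ m ≠ av}.Nonempty := by
      obtain ⟨m, hm⟩ := Infinite.exists_notMem_finset (insert av used)
      exact ⟨m, fun h => hm (Finset.mem_insert_of_mem h),
        fun h => hm (h ▸ Finset.mem_insert_self _ _)⟩
    exact (Nat.sInf_mem hne).1
  · have hne : {m : ℕ | m ∉ used}.Nonempty := by
      obtain ⟨m, hm⟩ := Infinite.exists_notMem_finset used
      exact ⟨m, hm⟩
    exact Nat.sInf_mem hne

lemma pick_le_of_two (used : Finset ℕ) (av B m₁ m₂ : ℕ) (h1 : m₁ ∉ used) (h2 : m₂ ∉ used)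
    (hne : m₁ ≠ m₂) (hb1 : m₁ ≤ B) (hb2 : m₂ ≤ B) : pick used av ≤ B := by
  unfold pick
  split
  · rcases ne_or_eq m₁ av with h | h
    · exact le_trans (Nat.sInf_le ⟨h1, h⟩) hb1
    · exact le_trans (Nat.sInf_le ⟨h2, h ▸ hne.symm⟩) hb2
  · exact le_trans (Nat.sInf_le h1) hb1

lemma pick_le_of_avoid (used : Finset ℕ) (av B m : ℕ) (hm : m ∉ used) (hb : m ≤ B)
    (hav : B < av) : pick used av ≤ B := by
  unfold pick
  split
  · next h =>
    have : sInf {m : ℕ | m ∉ used} ≤ m := Nat.sInf_le hm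
    omega
  · exact le_trans (Nat.sInf_le hm) hb

lemma assignND_length (w : List ℕ) : ∀ qs used, (assignND w qs used).length = qs.length
  | [], _ => rfl
  | q :: rest, used => by
    simp only [assignND, List.length_cons]
    rw [assignND_length w rest]

lemma assignND_not_mem (w : List ℕ) :
    ∀ qs used x, x ∈ assignND w qs used → x ∉ used
  | [], _, x, hx => by simp [assignND] at hx
  | q :: rest, used, x, hx => by
    simp only [assignND, List.mem_cons] at hx
    rcases hx with rfl | hx
    · exact pick_not_mem _ _
    · intro hu
      exact assignND_not_mem w rest _ x hx (Finset.mem_insert_of_mem hu)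

lemma assignND_nodup (w : List ℕ) : ∀ qs used, (assignND w qs used).Nodup
  | [], _ => List.nodup_nil
  | q :: rest, used => by
    simp only [assignND, List.nodup_cons]
    refine ⟨fun h => ?_, assignND_nodup w rest _⟩
    exact assignND_not_mem w rest _ _ h (Finset.mem_insert_self _ _)

lemma assignND_le (w : List ℕ) :
    ∀ qs used, used ⊆ Finset.range (w.length + 1) →
      used.card + qs.length ≤ w.length + 1 →
      (qs ≠ [] → qs.getLast? = some w.length) →
      ∀ x ∈ assignND w qs used, x ≤ w.length
  | [], _, _, _, _, x, hx => by simp [assignND] at hx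
  | q :: rest, used, hsub, hcard, hlast, x, hx => by
    simp only [List.length_cons] at hcard
    -- the free labels in range (w.length+1)
    have hFcard : rest.length + 1 ≤ (Finset.range (w.length + 1) \ used).card := by
      have := Finset.card_sdiff_of_subset hsub
      have h2 := Finset.card_range (w.length + 1)
      omega
    simp only [assignND, List.mem_cons] at hx
    cases rest with
    | nil =>
      -- single position; it must be w.length, whose avoid value is w.length + 1
      have hq : q = w.length := by
        have := hlast (by simp)
        simpa using this
      subst hq
      obtain ⟨m, hm⟩ : (Finset.range (w.length + 1) \ used).Nonempty := by
        rw [← Finset.card_pos]; omega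
      rw [Finset.mem_sdiff, Finset.mem_range] at hm
      have hav : (if w.length + 1 < w.length then w.getD (w.length + 1) 0
          else w.length + 1) = w.length + 1 := by
        rw [if_neg]; omega
      rcases hx with rfl | hx
      · rw [hav]
        exact pick_le_of_avoid _ _ _ m hm.2 (by omega) (by omega)
      · simp [assignND] at hx
    | cons r rs =>
      -- at least two free labels remain
      obtain ⟨m₁, hm₁, m₂, hm₂, hne⟩ :
          ∃ a ∈ Finset.range (w.length + 1) \ used,
            ∃ b ∈ Finset.range (w.length + 1) \ used, a ≠ b := by
        apply Finset.one_lt_card.mp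
        simp only [List.length_cons] at hFcard
        omega
      rw [Finset.mem_sdiff, Finset.mem_range] at hm₁ hm₂
      have hpick : pick used (if q + 1 < w.length then w.getD (q + 1) 0
          else w.length + 1) ≤ w.length :=
        pick_le_of_two _ _ _ m₁ m₂ hm₁.2 hm₂.2 hne (by omega) (by omega)
      rcases hx with rfl | hx
      · exact hpick
      · refine assignND_le w (r :: rs) _ ?_ ?_ ?_ x hx
        · intro y hy
          rcases Finset.mem_insert.mp hy with rfl | hy
          · rw [Finset.mem_range]; omega
          · exact hsub hy
        · rw [Finset.card_insert_of_notMem (pick_not_mem _ _)]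
          simp only [List.length_cons] at hcard ⊢
          omega
        · intro _
          have := hlast (by simp)
          rwa [List.getLast?_cons_cons] at this

lemma descent_ne (w : List ℕ) (h212 : avoids212 w) (q q' : ℕ) (hlt : q < q')
    (hq : isDescentLeaf w q = true) (hq' : isDescentLeaf w q' = true) :
    w.getD q 0 ≠ w.getD q' 0 := by
  simp only [isDescentLeaf, Bool.and_eq_true, Bool.or_eq_true, decide_eq_true_eq] at hq hq'
  obtain ⟨hq1, hq2⟩ := hq
  obtain ⟨hq1', _⟩ := hq'
  have hdesc : w.getD (q + 1) 0 < w.getD q 0 := by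
    rcases hq2 with h | h
    · omega
    · exact h
  intro heq
  rcases Nat.lt_or_ge (q + 1) q' with h | h
  · exact h212 q (q + 1) q' (Nat.lt_succ_self q) h hq1' ⟨hdesc, heq⟩ |>.elim
  · have : q' = q + 1 := by omega
    subst this
    omega

lemma descentLabels_nodup (w : List ℕ) (h212 : avoids212 w) : (descentLabels w).Nodup := by
  unfold descentLabels
  apply List.Nodup.map_on _ (List.nodup_range.filter _)
  intro q hq q' hq' heq
  rw [List.mem_filter] at hq hq'
  by_contra hne
  rcases Nat.lt_or_ge q q' with h | h
  · exact descent_ne w h212 q q' h hq.2 hq'.2 heq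
  · have h : q' < q := by omega
    exact descent_ne w h212 q' q h hq'.2 hq.2 heq.symm

lemma descentLabels_le (w : List ℕ) (n : ℕ) (hmem : ∀ x ∈ w, 1 ≤ x ∧ x ≤ n) :
    ∀ x ∈ descentLabels w, x ≤ n := by
  intro x hx
  unfold descentLabels at hx
  rw [List.mem_map] at hx
  obtain ⟨q, hq, rfl⟩ := hx
  rw [List.mem_filter] at hq
  have hql : q < w.length := by
    have := hq.2
    simp only [isDescentLeaf, Bool.and_eq_true, decide_eq_true_eq] at this
    exact this.1
  rw [List.getD_eq_getElem w 0 hql]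
  exact (hmem _ (List.getElem_mem hql)).2

lemma ndPositions_getLast (w : List ℕ) : (ndPositions w).getLast? = some w.length := by
  unfold ndPositions
  rw [List.range_succ, List.filter_append]
  have h : isDescentLeaf w w.length = false := by
    simp [isDescentLeaf]
  have : List.filter (fun q => !(isDescentLeaf w q)) [w.length] = [w.length] := by
    simp [List.filter, h]
  rw [this]
  exact List.getLast?_concat

lemma length_sum (w : List ℕ) :
    (descentLabels w).length + (ndPositions w).length = w.length + 1 := by
  unfold descentLabels ndPositions
  rw [List.length_map]
  have := (List.filter_append_perm (isDescentLeaf w) (List.range (w.length + 1))).length_eq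
  rw [List.length_append, List.length_range] at this
  exact this

/-- If `w` is a word of content a composition of `n` avoiding `2-1-2`, then the labeling
procedure for `Tree(w)` uses each label in `{c, 1, …, n}` (encoded `{0, 1, …, n}`)
exactly once. -/
theorem treeLeafLabels_perm (n : ℕ) (hn : 1 ≤ n) (w : List ℕ)
    (hlen : w.length = n) (hmem : ∀ x ∈ w, 1 ≤ x ∧ x ≤ n)
    (h212 : avoids212 w) :
    (treeLeafLabels w).Perm (List.range (n + 1)) := by
  set D := descentLabels w with hD
  set A := assignND w (ndPositions w) D.toFinset with hA
  have hDnodup : D.Nodup := descentLabels_nodup w h212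
  have hDcard : D.toFinset.card = D.length := List.toFinset_card_of_nodup hDnodup
  have hDle : ∀ x ∈ D, x ≤ n := descentLabels_le w n hmem
  have hDsub : D.toFinset ⊆ Finset.range (w.length + 1) := by
    intro x hx
    rw [Finset.mem_range, hlen]
    have := hDle x (List.mem_toFinset.mp hx)
    omega
  have hsum := length_sum w
  rw [← hD] at hsum
  have hAle : ∀ x ∈ A, x ≤ w.length := by
    apply assignND_le w (ndPositions w) D.toFinset hDsub
    · rw [hDcard]; omega
    · intro _; exact ndPositions_getLast w
  have hAnodup : A.Nodup := assignND_nodup w _ _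
  have hdisj : ∀ x ∈ D, x ∉ A := by
    intro x hx hxA
    exact assignND_not_mem w _ _ x hxA (List.mem_toFinset.mpr hx)
  have hNodup : (treeLeafLabels w).Nodup := by
    rw [treeLeafLabels]
    exact List.Nodup.append hDnodup hAnodup hdisj
  have hLen : (treeLeafLabels w).length = n + 1 := by
    rw [treeLeafLabels, List.length_append, assignND_length, ← hD]
    omega
  have hLe : ∀ x ∈ treeLeafLabels w, x < n + 1 := by
    intro x hx
    rw [treeLeafLabels, List.mem_append] at hx
    rcases hx with hx | hx
    · have := hDle x hx; omega
    · have := hAle x hx; omega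
  apply List.perm_of_nodup_nodup_toFinset_eq hNodup List.nodup_range
  have hrange : (List.range (n + 1)).toFinset = Finset.range (n + 1) := by
    ext x; simp
  rw [hrange]
  apply Finset.eq_of_subset_of_card_le
  · intro x hx
    rw [Finset.mem_range]
    exact hLe x (List.mem_toFinset.mp hx)
  · rw [Finset.card_range, List.toFinset_card_of_nodup hNodup, hLen]
end
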